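/- arXiv:1508.01922 — 8 statements merged into one kernel-verified Lean document; each statement's English description precedes it below -/
import Mathlib

section
/- Let X ∈ ℝ^{n×p} have orthonormal columns (xⱼᵀx_k = 1 if j = k and 0 otherwise), let y ∈ ℝⁿ, set cⱼ = xⱼᵀy for j = 1,…,p, suppose |c₁| ≥ |c₂| ≥ … ≥ |c_p| with |c_k| > |c_{k+1}|, and let δ satisfy |c_{k+1}| ≤ δ < |c_k|. Then the set of all solutions to the Discrete Dantzig Selector problem with parameter δ equals { (c₁+u₁,…,c_k+u_k, 0,…,0) : |uⱼ| ≤ δ for j = 1,…,k }. -/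
/-!
With orthonormal columns, `Xᵀ(y − Xβ) = c − β`, so the Dantzig constraint is the box
`|cⱼ − βⱼ| ≤ δ`. A coordinate with `|cⱼ| > δ` can then never vanish, while one with `|cⱼ| ≤ δ`
may be set to zero; hence the minimal support is exactly `{j | δ < |cⱼ|}`, which the ordering of
the `|cⱼ|` and the choice of `δ` make equal to the first `k` coordinates.
-/

noncomputable section
open Classical

/-- The ℓ₀ "norm": number of nonzero entries. -/
def l0 {p : ℕ} (β : Fin p → ℝ) : ℕ := (Finset.univ.filter fun i => β i ≠ 0).card

/-- Feasibility for the Dantzig-type constraint: `‖Xᵀ(y − Xβ)‖∞ ≤ δ`. -/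
def Feas {n p : ℕ} (X : Matrix (Fin n) (Fin p) ℝ) (y : Fin n → ℝ) (δ : ℝ)
    (β : Fin p → ℝ) : Prop :=
  ∀ j, |X.transpose.mulVec (y - X.mulVec β) j| ≤ δ

open Finset Matrix

theorem Matrix.transpose_mulVec_sub_mulVec_of_transpose_mul_self_eq_one
    {m n R : Type*} [Fintype m] [Fintype n] [DecidableEq n] [CommRing R]
    {X : Matrix m n R} (horth : Xᵀ * X = 1) (y : m → R) (β : n → R) :
    Xᵀ *ᵥ (y - X *ᵥ β) = Xᵀ *ᵥ y - β := by
  rw [mulVec_sub, mulVec_mulVec, horth, one_mulVec]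

theorem feas_iff_of_transpose_mul_self_eq_one {n p : ℕ} {X : Matrix (Fin n) (Fin p) ℝ}
    (horth : Xᵀ * X = 1) (y : Fin n → ℝ) (δ : ℝ) (β : Fin p → ℝ) :
    Feas X y δ β ↔ ∀ j, |(Xᵀ *ᵥ y) j - β j| ≤ δ := by
  simp only [Feas, transpose_mulVec_sub_mulVec_of_transpose_mul_self_eq_one horth, Pi.sub_apply]

section Box

variable {p : ℕ} {c β : Fin p → ℝ} {δ : ℝ}

theorem filter_lt_abs_subset_support (hβ : ∀ j, |c j - β j| ≤ δ) :
    univ.filter (fun j => δ < |c j|) ⊆ univ.filter (fun j => β j ≠ 0) := by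
  intro j
  simp only [mem_filter, mem_univ, true_and]
  intro hj hβj
  specialize hβ j
  rw [hβj, sub_zero] at hβ
  exact hβ.not_gt hj

theorem card_filter_lt_abs_le_l0 (hβ : ∀ j, |c j - β j| ≤ δ) :
    #(univ.filter fun j => δ < |c j|) ≤ l0 β :=
  card_le_card (filter_lt_abs_subset_support hβ)

theorem l0_le_card_filter_lt_abs (hβ : ∀ j, |c j| ≤ δ → β j = 0) :
    l0 β ≤ #(univ.filter fun j => δ < |c j|) := by
  refine card_le_card fun j => ?_
  simp only [mem_filter, mem_univ, true_and]
  contrapose!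
  exact hβ j

theorem setOf_l0_minimizers_box (c : Fin p → ℝ) (δ : ℝ) :
    {β : Fin p → ℝ | (∀ j, |c j - β j| ≤ δ) ∧
      ∀ β' : Fin p → ℝ, (∀ j, |c j - β' j| ≤ δ) → l0 β ≤ l0 β'} =
    {β : Fin p → ℝ | ∀ j, (δ < |c j| → |β j - c j| ≤ δ) ∧ (|c j| ≤ δ → β j = 0)} := by
  ext β
  simp only [Set.mem_ofPred_eq]
  constructor
  · rintro ⟨hβ, hmin⟩
    -- keeping exactly the coordinates `j` with `δ < |c j|` is feasible
    set β₀ : Fin p → ℝ := fun j => if δ < |c j| then c j else 0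
    have hβ₀ : ∀ j, |c j - β₀ j| ≤ δ := fun j => by
      by_cases hj : δ < |c j|
      · simpa [β₀, hj] using (abs_nonneg _).trans (hβ j)
      · simpa [β₀, hj] using not_lt.1 hj
    have hsupp : univ.filter (fun j => δ < |c j|) = univ.filter (fun j => β j ≠ 0) :=
      eq_of_subset_of_card_le (filter_lt_abs_subset_support hβ)
        ((hmin β₀ hβ₀).trans (l0_le_card_filter_lt_abs fun j hj => by simp [β₀, hj.not_gt]))
    refine fun j => ⟨fun _ => abs_sub_comm (c j) (β j) ▸ hβ j, fun hj => ?_⟩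
    by_contra hβj
    have hj' : j ∈ univ.filter (fun j => β j ≠ 0) := by simpa using hβj
    rw [← hsupp, mem_filter] at hj'
    exact hj.not_gt hj'.2
  · intro hβ
    refine ⟨fun j => ?_, fun β' hβ' =>
      (l0_le_card_filter_lt_abs fun j => (hβ j).2).trans (card_filter_lt_abs_le_l0 hβ')⟩
    rcases lt_or_ge δ |c j| with hj | hj
    · rw [abs_sub_comm]; exact (hβ j).1 hj
    · rwa [(hβ j).2 hj, sub_zero]

end Box

/-- `0`-indexed: the paper's `c_k` is `c ⟨k - 1, _⟩` and its `c_{k+1}` is `c ⟨k, _⟩`. -/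
theorem stmt1 {n p : ℕ} (X : Matrix (Fin n) (Fin p) ℝ)
    (horth : X.transpose * X = 1)
    (y : Fin n → ℝ) (c : Fin p → ℝ) (hc : ∀ j, c j = ∑ i, X i j * y i)
    (hord : ∀ i j : Fin p, i ≤ j → |c j| ≤ |c i|)
    (k : ℕ) (hkp : k < p)
    (δ : ℝ) (hδlow : |c ⟨k, hkp⟩| ≤ δ) (hδhigh : δ < |c ⟨k - 1, by omega⟩|) :
    {β : Fin p → ℝ | Feas X y δ β ∧ ∀ β' : Fin p → ℝ, Feas X y δ β' → l0 β ≤ l0 β'} =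
    {β : Fin p → ℝ | (∀ j : Fin p, (j : ℕ) < k → |β j - c j| ≤ δ) ∧
      (∀ j : Fin p, k ≤ (j : ℕ) → β j = 0)} := by
  have hXy : Xᵀ *ᵥ y = c := funext fun j => by simp [mulVec, dotProduct, hc]
  have hbig (j : Fin p) : δ < |c j| ↔ (j : ℕ) < k := by
    refine ⟨fun h => ?_, fun hj => hδhigh.trans_le (hord j _ (Fin.le_def.2 (by simp; omega)))⟩
    by_contra! hj
    exact ((hord ⟨k, hkp⟩ j (Fin.le_def.2 hj)).trans hδlow).not_gt h
  have hsmall (j : Fin p) : |c j| ≤ δ ↔ k ≤ (j : ℕ) := by rw [← not_lt, hbig, not_lt]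
  simp only [feas_iff_of_transpose_mul_self_eq_one horth, hXy]
  rw [setOf_l0_minimizers_box]
  simp only [hbig, hsmall, forall_and]
end
end

section
/- Let X ∈ ℝ^{n×p}, let k be a positive integer with 2k ≤ p, and let c₀ ≥ 1. Then γ(2k) ≥ κ(k, c₀)/√2. -/
noncomputable section
open Classical

/-- Euclidean norm of a vector. -/
def l2 {q : ℕ} (v : Fin q → ℝ) : ℝ := Real.sqrt (∑ i, (v i) ^ 2)

/-- ℓ₁-norm of the sub-vector of `θ` with coordinates in `J`. -/
def l1S {p : ℕ} (J : Finset (Fin p)) (θ : Fin p → ℝ) : ℝ := ∑ i ∈ J, |θ i|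

/-- Euclidean norm of the sub-vector of `θ` with coordinates in `J`. -/
def l2S {p : ℕ} (J : Finset (Fin p)) (θ : Fin p → ℝ) : ℝ := Real.sqrt (∑ i ∈ J, (θ i) ^ 2)

/-- `γ(k) = min{ ‖Xθ‖₂/‖θ‖₂ : θ ≠ 0, ‖θ‖₀ ≤ k }`. -/
def gammaX {n p : ℕ} (X : Matrix (Fin n) (Fin p) ℝ) (k : ℕ) : ℝ :=
  sInf {r : ℝ | ∃ θ : Fin p → ℝ, θ ≠ 0 ∧ l0 θ ≤ k ∧ r = l2 (X.mulVec θ) / l2 θ}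

/-- `κ(k, c₀) = min over |J₀| ≤ k of min{ ‖Xθ‖₂/‖θ_{J₀}‖₂ : θ ≠ 0, ‖θ_{J₀ᶜ}‖₁ ≤ c₀‖θ_{J₀}‖₁ }`. -/
def kappaX {n p : ℕ} (X : Matrix (Fin n) (Fin p) ℝ) (k : ℕ) (c0 : ℝ) : ℝ :=
  sInf {r : ℝ | ∃ (J0 : Finset (Fin p)) (θ : Fin p → ℝ), J0.card ≤ k ∧ θ ≠ 0 ∧
    l1S J0ᶜ θ ≤ c0 * l1S J0 θ ∧ r = l2 (X.mulVec θ) / l2S J0 θ}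

/-!
Let `θ ≠ 0` have at most `2k` nonzero entries and let `J` index its `k` largest ones in absolute
value. At most `k` nonzero entries lie outside `J`, each no larger than any entry in `J`, so
`‖θ_{Jᶜ}‖₁ ≤ ‖θ_J‖₁ ≤ c₀‖θ_J‖₁` and `‖θ‖₂² ≤ 2‖θ_J‖₂²`. Hence `θ` is admissible for `κ(k, c₀)`
with `J₀ = J`, and `κ(k, c₀) ≤ ‖Xθ‖₂/‖θ_J‖₂ ≤ √2‖Xθ‖₂/‖θ‖₂`.
-/

theorem Finset.exists_subset_card_eq_min_forall_le {ι α : Type*} [DecidableEq ι] [LinearOrder α]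
    (f : ι → α) (k : ℕ) (S : Finset ι) :
    ∃ J ⊆ S, J.card = min k S.card ∧ ∀ i ∈ J, ∀ j ∈ S \ J, f j ≤ f i := by
  induction k generalizing S with
  | zero => exact ⟨∅, S.empty_subset, by simp, by simp⟩
  | succ k ih =>
    rcases S.eq_empty_or_nonempty with rfl | hS
    · exact ⟨∅, subset_refl _, by simp, by simp⟩
    obtain ⟨m, hmS, hm⟩ := S.exists_max_image f hS
    obtain ⟨J, hJS, hJcard, hJ⟩ := ih (S.erase m)
    have hmJ : m ∉ J := fun h => S.notMem_erase m (hJS h)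
    refine ⟨insert m J, Finset.insert_subset hmS (hJS.trans (S.erase_subset m)), ?_, ?_⟩
    · rw [Finset.card_insert_of_notMem hmJ, hJcard, Finset.card_erase_of_mem hmS]
      have := Finset.card_pos.mpr hS
      omega
    · intro i hi j hj
      rw [Finset.mem_sdiff, Finset.mem_insert, not_or] at hj
      rcases Finset.mem_insert.mp hi with rfl | hi
      · exact hm j hj.1
      · exact hJ i hi j (by simp [hj])

theorem Finset.sum_le_sum_of_card_le_of_forall_le {ι M : Type*} [AddCommMonoid M] [LinearOrder M]
    [IsOrderedAddMonoid M] (f : ι → M) {A B : Finset ι} (hf : ∀ i ∈ A, 0 ≤ f i)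
    (hcard : B.card ≤ A.card) (h : ∀ j ∈ B, ∀ i ∈ A, f j ≤ f i) :
    ∑ j ∈ B, f j ≤ ∑ i ∈ A, f i := by
  rcases A.eq_empty_or_nonempty with rfl | hA
  · simp [Finset.card_eq_zero.mp (Nat.le_zero.mp hcard)]
  obtain ⟨m, hmA, hm⟩ := A.exists_min_image f hA
  calc ∑ j ∈ B, f j ≤ B.card • f m := B.sum_le_card_nsmul f _ fun j hj => h j hj m hmA
    _ ≤ A.card • f m := nsmul_le_nsmul_left (hf m hmA) hcard
    _ ≤ ∑ i ∈ A, f i := A.card_nsmul_le_sum f _ hm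

theorem Finset.sum_compl_eq_sum_sdiff_of_eq_zero {ι M : Type*} [Fintype ι] [DecidableEq ι]
    [AddCommMonoid M] {J S : Finset ι} {g : ι → M} (hg : ∀ i ∉ S, g i = 0) :
    ∑ i ∈ Jᶜ, g i = ∑ i ∈ S \ J, g i := by
  refine (Finset.sum_subset (fun i hi => ?_) fun i hi hni => hg i ?_).symm
  · exact Finset.mem_compl.mpr (Finset.mem_sdiff.mp hi).2
  · exact fun hiS => hni (Finset.mem_sdiff.mpr ⟨hiS, Finset.mem_compl.mp hi⟩)

section Sparse

variable {p : ℕ}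

theorem exists_card_le_l1S_compl_le_and_l2_le_of_l0_le {θ : Fin p → ℝ} {k : ℕ}
    (hθ : l0 θ ≤ 2 * k) :
    ∃ J : Finset (Fin p), J.card ≤ k ∧ l1S Jᶜ θ ≤ l1S J θ ∧ l2 θ ≤ √2 * l2S J θ := by
  set S := Finset.univ.filter fun i => θ i ≠ 0
  have hS : ∀ i ∉ S, θ i = 0 := by simp [S]
  obtain ⟨J, hJS, hJcard, hJ⟩ := Finset.exists_subset_card_eq_min_forall_le (|θ ·|) k S
  have hcard : (S \ J).card ≤ J.card := by
    have : S.card ≤ 2 * k := hθ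
    rw [Finset.card_sdiff_of_subset hJS, hJcard]
    omega
  have hl1 : ∑ i ∈ S \ J, |θ i| ≤ ∑ i ∈ J, |θ i| :=
    Finset.sum_le_sum_of_card_le_of_forall_le _ (fun _ _ => abs_nonneg _) hcard
      fun j hj i hi => hJ i hi j hj
  have hl2 : ∑ i ∈ S \ J, θ i ^ 2 ≤ ∑ i ∈ J, θ i ^ 2 :=
    Finset.sum_le_sum_of_card_le_of_forall_le _ (fun _ _ => sq_nonneg _) hcard
      fun j hj i hi => sq_le_sq.mpr (hJ i hi j hj)
  refine ⟨J, hJcard ▸ min_le_left _ _, ?_, ?_⟩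
  · rw [l1S, l1S, Finset.sum_compl_eq_sum_sdiff_of_eq_zero (by simpa using hS)]
    exact hl1
  · rw [l2, l2S, ← Real.sqrt_mul zero_le_two]
    refine Real.sqrt_le_sqrt ?_
    rw [← Finset.sum_add_sum_compl J,
      Finset.sum_compl_eq_sum_sdiff_of_eq_zero (by simpa using hS)]
    linarith

theorem l2_pos {θ : Fin p → ℝ} (hθ : θ ≠ 0) : 0 < l2 θ := by
  obtain ⟨i, hi⟩ := Function.ne_iff.mp hθ
  exact Real.sqrt_pos.mpr
    (Finset.sum_pos' (fun j _ => sq_nonneg _) ⟨i, Finset.mem_univ i, sq_pos_of_ne_zero hi⟩)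

theorem l0_single_le (i : Fin p) : l0 (Pi.single i (1 : ℝ)) ≤ 1 := by
  simp [l0, Pi.single_apply, Finset.filter_eq']

theorem l1S_nonneg (J : Finset (Fin p)) (θ : Fin p → ℝ) : 0 ≤ l1S J θ :=
  Finset.sum_nonneg fun _ _ => abs_nonneg _

end Sparse

section

variable {n p : ℕ} (X : Matrix (Fin n) (Fin p) ℝ)

theorem kappaX_le {k : ℕ} {c0 : ℝ} {J : Finset (Fin p)} {θ : Fin p → ℝ} (hJ : J.card ≤ k)
    (hθ : θ ≠ 0) (hcone : l1S Jᶜ θ ≤ c0 * l1S J θ) :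
    kappaX X k c0 ≤ l2 (X.mulVec θ) / l2S J θ := by
  refine csInf_le ⟨0, ?_⟩ ⟨J, θ, hJ, hθ, hcone, rfl⟩
  rintro _ ⟨_, _, _, _, _, rfl⟩
  exact div_nonneg (Real.sqrt_nonneg _) (Real.sqrt_nonneg _)

theorem le_gammaX {k : ℕ} (hk : 0 < k) (hp : 0 < p) {a : ℝ}
    (h : ∀ θ : Fin p → ℝ, θ ≠ 0 → l0 θ ≤ k → a ≤ l2 (X.mulVec θ) / l2 θ) : a ≤ gammaX X k := by
  refine le_csInf ⟨_, Pi.single ⟨0, hp⟩ 1, ?_, (l0_single_le _).trans hk, rfl⟩ ?_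
  · simp
  · rintro _ ⟨θ, hθ, hl0, rfl⟩
    exact h θ hθ hl0

end

/-- For `k ≥ 1` with `2k ≤ p` and `c₀ ≥ 1`: `γ(2k) ≥ κ(k, c₀)/√2`. -/
theorem stmt2 {n p : ℕ} (X : Matrix (Fin n) (Fin p) ℝ)
    (k : ℕ) (hk : 0 < k) (h2k : 2 * k ≤ p) (c0 : ℝ) (hc0 : 1 ≤ c0) :
    kappaX X k c0 / Real.sqrt 2 ≤ gammaX X (2 * k) := by
  refine le_gammaX X (by omega) (by omega) fun θ hθ hl0 => ?_
  obtain ⟨J, hJk, hl1, hl2⟩ := exists_card_le_l1S_compl_le_and_l2_le_of_l0_le hl0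
  have hcone : l1S Jᶜ θ ≤ c0 * l1S J θ :=
    hl1.trans (le_mul_of_one_le_left (l1S_nonneg J θ) hc0)
  have hθpos := l2_pos hθ
  calc kappaX X k c0 / √2 ≤ l2 (X.mulVec θ) / l2S J θ / √2 := by
        gcongr
        exact kappaX_le X hJk hθ hcone
    _ = l2 (X.mulVec θ) / (√2 * l2S J θ) := by rw [div_div, mul_comm]
    _ ≤ l2 (X.mulVec θ) / l2 θ := div_le_div_of_nonneg_left (Real.sqrt_nonneg _) hθpos hl2
end
end

section
/- Let X ∈ ℝ^{n×p} with p ≥ 2 have columns of unit ℓ₂-norm, let ε ∈ ℝⁿ have i.i.d. N(0, σ²) entries with σ > 0, let a ≥ 0, and set δ = σ√(2(1+a)·log p). Then P( ‖Xᵀε‖∞ ≤ δ ) ≥ 1 − ( pᵃ √(π log p) )⁻¹. -/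
/-!
Each coordinate `Zⱼ = ∑ᵢ Xᵢⱼ εᵢ` of `Xᵀε` is a sum of independent centred Gaussians, hence has law
`N(0, σ² ∑ᵢ Xᵢⱼ²) = N(0, σ²)`. Mills' ratio `P(Z > t) ≤ (σ² / t) φ(t)` bounds the two-sided tail at
`t = δ`, where `δ` is chosen so that `exp (-δ² / 2σ²) = p^{-(1+a)}`; this gives
`P(|Zⱼ| > δ) ≤ (p^{1+a} √(π log p))⁻¹`, and a union bound over the `p` columns costs a factor `p`.
-/

open MeasureTheory ProbabilityTheory Real Filter Set Topology
open scoped NNReal ENNReal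

namespace ProbabilityTheory

section GaussianSum

variable {Ω ι : Type*} {mΩ : MeasurableSpace Ω} {P : Measure Ω} [IsProbabilityMeasure P]
  {X : ι → Ω → ℝ}

lemma iIndepFun.hasLaw_gaussianReal_finsetSum (hindep : iIndepFun X P) {m : ι → ℝ}
    {v : ι → ℝ≥0} (hX : ∀ i, HasLaw (X i) (gaussianReal (m i) (v i)) P) (s : Finset ι) :
    HasLaw (∑ i ∈ s, X i) (gaussianReal (∑ i ∈ s, m i) (∑ i ∈ s, v i)) P := by
  classical
  induction s using Finset.cons_induction with
  | empty =>
    simpa [gaussianReal_zero_var] using hasLaw_dirac_of_ae_eq (P := P) (X := 0) (x := 0) (by rfl)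
  | cons i s his ih =>
    have hindep_i : IndepFun (X i) (∑ j ∈ s, X j) P :=
      (hindep.indepFun_finsetSum_of_notMem₀ (fun j => (hX j).aemeasurable) his).symm
    simpa only [Finset.sum_cons, gaussianReal_conv_gaussianReal] using
      hindep_i.hasLaw_add (hX i) ih

lemma iIndepFun.hasLaw_gaussianReal_sum_mul [Fintype ι] (hindep : iIndepFun X P) {v : ℝ≥0}
    (hX : ∀ i, HasLaw (X i) (gaussianReal 0 v) P) (c : ι → ℝ) :
    HasLaw (fun ω => ∑ i, c i * X i ω) (gaussianReal 0 ((∑ i, c i ^ 2).toNNReal * v)) P := by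
  have hcX : ∀ i, HasLaw (fun ω => c i * X i ω)
      (gaussianReal 0 (.mk (c i ^ 2) (sq_nonneg _) * v)) P := fun i => by
    simpa using gaussianReal_const_mul (hX i) (c i)
  have hsum := (hindep.comp (fun i x => c i * x) fun i => measurable_const_mul (c i)
    ).hasLaw_gaussianReal_finsetSum hcX Finset.univ
  convert hsum using 2
  · simp [Finset.sum_apply]
  · simp
  · ext
    simp [← Finset.sum_mul, Real.toNNReal_of_nonneg (Finset.sum_nonneg fun i _ => sq_nonneg (c i))]

end GaussianSum

section GaussianTail

lemma hasDerivAt_gaussianPDFReal (μ : ℝ) (v : ℝ≥0) (x : ℝ) :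
    HasDerivAt (gaussianPDFReal μ v) (-((x - μ) / v) * gaussianPDFReal μ v x) x := by
  have hsq : HasDerivAt (fun y => -(y - μ) ^ 2 / (2 * v)) (-(2 * (x - μ)) / (2 * v)) x := by
    simpa using (((hasDerivAt_id x).sub_const μ).pow 2).neg.div_const (2 * (v : ℝ))
  rw [gaussianPDFReal_def]
  exact (hsq.exp.const_mul _).congr_deriv (by ring)

variable {v : ℝ≥0}

lemma tendsto_gaussianPDFReal_atTop (μ : ℝ) (hv : v ≠ 0) :
    Tendsto (gaussianPDFReal μ v) atTop (𝓝 0) := by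
  have hsq : Tendsto (fun x : ℝ => -(x - μ) ^ 2 / (2 * v)) atTop atBot :=
    (tendsto_neg_atTop_atBot.comp ((tendsto_pow_atTop two_ne_zero).comp
      (tendsto_atTop_add_const_right _ (-μ) tendsto_id))).atBot_div_const (by positivity)
  simpa [gaussianPDFReal_def] using (tendsto_exp_atBot.comp hsq).const_mul (√(2 * π * v))⁻¹

lemma integrable_mul_gaussianPDFReal (hv : v ≠ 0) :
    Integrable (fun x => x * gaussianPDFReal 0 v x) := by
  have hb : (0 : ℝ) < (2 * (v : ℝ))⁻¹ := by positivity
  refine ((integrable_mul_exp_neg_mul_sq hb).const_mul (√(2 * π * v))⁻¹).congr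
    (ae_of_all _ fun x => ?_)
  simp only [gaussianPDFReal, sub_zero]
  ring_nf

lemma integral_Ioi_mul_gaussianPDFReal (hv : v ≠ 0) (t : ℝ) :
    ∫ x in Ioi t, x * gaussianPDFReal 0 v x = v * gaussianPDFReal 0 v t := by
  have hderiv : ∀ x ∈ Ici t, HasDerivAt (fun x => -v * gaussianPDFReal 0 v x)
      (x * gaussianPDFReal 0 v x) x := fun x _ => by
    refine ((hasDerivAt_gaussianPDFReal 0 v x).const_mul (-(v : ℝ))).congr_deriv ?_
    field_simp [NNReal.coe_ne_zero.mpr hv]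
    ring
  have hlim : Tendsto (fun x => -v * gaussianPDFReal 0 v x) atTop (𝓝 0) := by
    simpa using (tendsto_gaussianPDFReal_atTop 0 hv).const_mul (-(v : ℝ))
  rw [integral_Ioi_of_hasDerivAt_of_tendsto' hderiv
    (integrable_mul_gaussianPDFReal hv).integrableOn hlim]
  ring

/-- Mills' ratio: on `(t, ∞)` the density is at most `(x / t) φ(x)`, and `x φ(x) = -v φ'(x)`. -/
lemma gaussianReal_Ioi_le (hv : v ≠ 0) {t : ℝ} (ht : 0 < t) :
    gaussianReal 0 v (Ioi t) ≤ ENNReal.ofReal (v / t * gaussianPDFReal 0 v t) := by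
  rw [gaussianReal_apply_eq_integral _ hv]
  refine ENNReal.ofReal_le_ofReal ?_
  calc ∫ x in Ioi t, gaussianPDFReal 0 v x
      ≤ ∫ x in Ioi t, t⁻¹ * (x * gaussianPDFReal 0 v x) := by
        refine setIntegral_mono_on (integrable_gaussianPDFReal 0 v).integrableOn
          ((integrable_mul_gaussianPDFReal hv).integrableOn.const_mul _) measurableSet_Ioi
          fun x hx => ?_
        rw [← mul_assoc]
        exact le_mul_of_one_le_left (gaussianPDFReal_nonneg _ _ _)
          ((one_le_inv_mul₀ ht).mpr (le_of_lt hx))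
    _ = v / t * gaussianPDFReal 0 v t := by
        rw [integral_const_mul, integral_Ioi_mul_gaussianPDFReal hv]
        ring

lemma gaussianReal_abs_gt_le (hv : v ≠ 0) {t : ℝ} (ht : 0 < t) :
    gaussianReal 0 v {x | t < |x|} ≤ ENNReal.ofReal (2 * (v / t * gaussianPDFReal 0 v t)) := by
  have hsplit : {x : ℝ | t < |x|} = Neg.neg ⁻¹' Ioi t ∪ Ioi t := by
    ext x
    simp only [mem_ofPred_eq, mem_union, mem_preimage, mem_Ioi, lt_abs, or_comm]
  have hsymm : gaussianReal 0 v (Neg.neg ⁻¹' Ioi t) = gaussianReal 0 v (Ioi t) := by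
    rw [← Measure.map_apply measurable_neg measurableSet_Ioi, gaussianReal_map_neg, neg_zero]
  have hq : 0 ≤ v / t * gaussianPDFReal 0 v t :=
    mul_nonneg (div_nonneg v.coe_nonneg ht.le) (gaussianPDFReal_nonneg _ _ _)
  calc gaussianReal 0 v {x | t < |x|}
      ≤ gaussianReal 0 v (Neg.neg ⁻¹' Ioi t) + gaussianReal 0 v (Ioi t) :=
        hsplit ▸ measure_union_le _ _
    _ ≤ ENNReal.ofReal (v / t * gaussianPDFReal 0 v t) +
          ENNReal.ofReal (v / t * gaussianPDFReal 0 v t) := by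
        rw [hsymm]
        exact add_le_add (gaussianReal_Ioi_le hv ht) (gaussianReal_Ioi_le hv ht)
    _ = ENNReal.ofReal (2 * (v / t * gaussianPDFReal 0 v t)) := by
        rw [← ENNReal.ofReal_add hq hq, two_mul]

lemma gaussianReal_abs_gt_sqrt_log_le {p σ a : ℝ} (hp : 1 < p) (hσ : 0 < σ) (ha : 0 ≤ a) :
    gaussianReal 0 (σ ^ 2).toNNReal {x | σ * √(2 * (1 + a) * log p) < |x|} ≤
      ENNReal.ofReal ((p ^ (1 + a) * √(π * log p))⁻¹) := by
  set L := log p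
  have hL : 0 < L := log_pos hp
  set δ := σ * √(2 * (1 + a) * L) with hδ
  have hv : (σ ^ 2).toNNReal ≠ 0 := (Real.toNNReal_pos.mpr (by positivity)).ne'
  have hv' : ((σ ^ 2).toNNReal : ℝ) = σ ^ 2 := Real.coe_toNNReal _ (sq_nonneg σ)
  have hexp : rexp (-δ ^ 2 / (2 * σ ^ 2)) = (p ^ (1 + a))⁻¹ := by
    rw [hδ, mul_pow, sq_sqrt (by positivity), rpow_def_of_pos (by linarith), ← exp_neg]
    congr 1
    field_simp
    ring
  have hcoef : 2 * (σ ^ 2 / δ) * (√(2 * π * σ ^ 2))⁻¹ = (√((1 + a) * (π * L)))⁻¹ := by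
    have hsqrt : √(2 * (1 + a) * L) * √(2 * π) = 2 * √((1 + a) * (π * L)) := by
      rw [← sqrt_mul (by positivity), show (2 : ℝ) = √(2 ^ 2) from (sqrt_sq zero_le_two).symm,
        ← sqrt_mul (by positivity)]
      congr 1
      ring
    rw [sqrt_mul (by positivity : (0 : ℝ) ≤ 2 * π) (σ ^ 2), sqrt_sq hσ.le, hδ]
    have : 0 < √(2 * (1 + a) * L) := by positivity
    have : 0 < √(2 * π) := by positivity
    field_simp
    rw [hsqrt]
    ring_nf
  refine (gaussianReal_abs_gt_le hv (by positivity)).trans (ENNReal.ofReal_le_ofReal ?_)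
  calc 2 * ((σ ^ 2).toNNReal / δ * gaussianPDFReal 0 (σ ^ 2).toNNReal δ)
      = (√((1 + a) * (π * L)))⁻¹ * (p ^ (1 + a))⁻¹ := by
        rw [gaussianPDFReal, hv', sub_zero, hexp, ← hcoef]
        ring
    _ ≤ (√(π * L))⁻¹ * (p ^ (1 + a))⁻¹ := by
        have hmono : √(π * L) ≤ √((1 + a) * (π * L)) :=
          sqrt_le_sqrt (le_mul_of_one_le_left (by positivity) (by linarith))
        exact mul_le_mul_of_nonneg_right (inv_anti₀ (by positivity) hmono) (by positivity)
    _ = (p ^ (1 + a) * √(π * L))⁻¹ := by rw [mul_inv, mul_comm]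

end GaussianTail

end ProbabilityTheory

lemma one_sub_card_mul_le_measure_iInter_compl {Ω ι : Type*} [MeasurableSpace Ω] [Fintype ι]
    (P : Measure Ω) [IsProbabilityMeasure P] {A : ι → Set Ω} {q : ℝ≥0∞}
    (hA : ∀ i, P (A i) ≤ q) :
    1 - Fintype.card ι * q ≤ P (⋂ i, (A i)ᶜ) := by
  have hunion : P (⋃ i, A i) ≤ Fintype.card ι * q :=
    calc P (⋃ i, A i) ≤ ∑ i, P (A i) := measure_iUnion_fintype_le P A
      _ ≤ ∑ _i : ι, q := Finset.sum_le_sum fun i _ => hA i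
      _ = Fintype.card ι * q := by simp
  rw [← compl_iUnion]
  calc 1 - Fintype.card ι * q ≤ 1 - P (⋃ i, A i) := tsub_le_tsub_left hunion 1
    _ ≤ P (⋃ i, A i)ᶜ :=
      tsub_le_iff_left.mpr (measure_univ (μ := P) ▸ measure_univ_le_add_compl _)

theorem stmt4_general {Ω : Type*} [MeasurableSpace Ω] (P : Measure Ω) [IsProbabilityMeasure P]
    {n p : ℕ} (hp : 2 ≤ p) (X : Matrix (Fin n) (Fin p) ℝ)
    (hcols : ∀ j, ∑ i, (X i j) ^ 2 = 1)
    (σ : ℝ) (hσ : 0 < σ)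
    (ε : Fin n → Ω → ℝ)
    (hindep : iIndepFun ε P)
    (hgauss : ∀ i, Measure.map (ε i) P = gaussianReal 0 (σ ^ 2).toNNReal)
    (a : ℝ) (ha : 0 ≤ a)
    (δ : ℝ) (hδ : δ = σ * Real.sqrt (2 * (1 + a) * Real.log p)) :
    ENNReal.ofReal (1 - ((p : ℝ) ^ a * Real.sqrt (Real.pi * Real.log p))⁻¹) ≤
      P {ω | ∀ j : Fin p, |∑ i, X i j * ε i ω| ≤ δ} := by
  have hp1 : (1 : ℝ) < p := by exact_mod_cast hp
  have hε : ∀ i, HasLaw (ε i) (gaussianReal 0 (σ ^ 2).toNNReal) P :=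
    fun i => ⟨.of_map_ne_zero (by simp [hgauss i, NeZero.ne]), hgauss i⟩
  have htail : ∀ j, P {ω | δ < |∑ i, X i j * ε i ω|} ≤
      ENNReal.ofReal ((p ^ (1 + a) * √(π * log p))⁻¹) := fun j => by
    have hlaw := hindep.hasLaw_gaussianReal_sum_mul hε (fun i => X i j)
    rw [hcols j, Real.toNNReal_one, one_mul] at hlaw
    rw [hlaw.measure_eq (measurableSet_lt measurable_const measurable_abs), hδ]
    exact gaussianReal_abs_gt_sqrt_log_le hp1 hσ ha
  have hfactor : ENNReal.ofReal (1 - ((p : ℝ) ^ a * √(π * log p))⁻¹) =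
      1 - p * ENNReal.ofReal ((p ^ (1 + a) * √(π * log p))⁻¹) := by
    have hpq : ((p : ℝ) ^ a * √(π * log p))⁻¹ = p * ((p : ℝ) ^ (1 + a) * √(π * log p))⁻¹ := by
      rw [rpow_add (by linarith), rpow_one]
      field_simp
    rw [hpq, ENNReal.ofReal_sub _ (by positivity), ENNReal.ofReal_one,
      ENNReal.ofReal_mul (Nat.cast_nonneg p), ENNReal.ofReal_natCast]
  have hevent : {ω | ∀ j : Fin p, |∑ i, X i j * ε i ω| ≤ δ} =
      ⋂ j, {ω | δ < |∑ i, X i j * ε i ω|}ᶜ := by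
    ext ω
    simp
  rw [hfactor, hevent]
  simpa using one_sub_card_mul_le_measure_iInter_compl P htail

/-- If the columns of `X` have unit ℓ₂-norm and `ε` has i.i.d. `N(0,σ²)`
entries, then with `δ = σ√(2(1+a)log p)` we have
`P(‖Xᵀε‖∞ ≤ δ) ≥ 1 − (pᵃ √(π log p))⁻¹`. -/
theorem stmt4 {Ω : Type*} [MeasurableSpace Ω] (P : Measure Ω) [IsProbabilityMeasure P]
    {n p : ℕ} (hp : 2 ≤ p) (X : Matrix (Fin n) (Fin p) ℝ)
    (hcols : ∀ j, ∑ i, (X i j) ^ 2 = 1)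
    (σ : ℝ) (hσ : 0 < σ)
    (ε : Fin n → Ω → ℝ) (hmeas : ∀ i, Measurable (ε i))
    (hindep : iIndepFun ε P)
    (hgauss : ∀ i, Measure.map (ε i) P = gaussianReal 0 (σ ^ 2).toNNReal)
    (a : ℝ) (ha : 0 ≤ a)
    (δ : ℝ) (hδ : δ = σ * Real.sqrt (2 * (1 + a) * Real.log p)) :
    ENNReal.ofReal (1 - ((p : ℝ) ^ a * Real.sqrt (Real.pi * Real.log p))⁻¹) ≤
      P {ω | ∀ j : Fin p, |∑ i, X i j * ε i ω| ≤ δ} :=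
  stmt4_general P hp X hcols σ hσ ε hindep hgauss a ha δ hδ
end

section
/- (Fixed-p asymptotics, support recovery.) Fix p and a vector β̃* ∈ ℝ^p with support J* = { j : β̃*_j ≠ 0 }. For each n, let Xₙ ∈ ℝ^{n×p} be a design matrix, set β*ₙ = n^{1/2} β̃*, and let yₙ = Xₙ β*ₙ + (ε₁,…,εₙ)ᵀ, where ε₁, ε₂, … are i.i.d. real random variables with mean zero and finite variance. Assume XₙᵀXₙ converges to an invertible matrix C as n → ∞, and let δₙ be a sequence with δₙ → ∞ and δₙ = o(n^{1/2}). Then the probability of the event that every solution β̂ of the Discrete Dantzig Selector problem with data (Xₙ, yₙ) and parameter δₙ satisfies { j : β̂_j ≠ 0 } = J* tends to one as n → ∞. -/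
/-! On the event `‖Xₙᵀε‖∞ < δₙ` the scaled truth `√n β̃*` is feasible, and for every feasible `β`
the vector `(XₙᵀXₙ)(√n β̃* − β)` has entries at most `2δₙ`, so each coordinate of `√n β̃* − β` is
at most `2δₙ ∑ₖ |(XₙᵀXₙ)⁻¹ⱼₖ| = o(√n)`. Hence for large `n` no feasible vector vanishes on `J*`,
and an `ℓ₀`-minimal solution, having no more nonzeros than the feasible truth, has support
exactly `J*`. The event has probability tending to one by Chebyshev: `(Xₙᵀε)ⱼ` has mean zero and
variance `(XₙᵀXₙ)ⱼⱼ σ² → Cⱼⱼ σ²`, while `δₙ → ∞`. -/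

noncomputable section
open Classical MeasureTheory ProbabilityTheory Filter Asymptotics
open scoped Topology Matrix

theorem support_eq_of_l0_minimal {p : ℕ} {F : (Fin p → ℝ) → Prop} {βs βhat : Fin p → ℝ}
    (hβs : F βs) (hsupp : ∀ β, F β → ∀ j, βs j ≠ 0 → β j ≠ 0)
    (hhat : F βhat ∧ ∀ β, F β → l0 βhat ≤ l0 β) :
    {j | βhat j ≠ 0} = {j | βs j ≠ 0} := by
  have hsub : (Finset.univ.filter fun j => βs j ≠ 0) ⊆ Finset.univ.filter fun j => βhat j ≠ 0 :=
    Finset.monotone_filter_right _ fun j _ => hsupp βhat hhat.1 j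
  have h := Finset.eq_of_subset_of_card_le hsub (hhat.2 βs hβs)
  simpa using congrArg (fun s : Finset (Fin p) => (s : Set (Fin p))) h.symm

theorem Matrix.abs_mulVec_apply_le {m n : Type*} [Fintype n] (B : Matrix m n ℝ) {w : n → ℝ}
    {b : ℝ} (hw : ∀ k, |w k| ≤ b) (j : m) : |(B *ᵥ w) j| ≤ (∑ k, |B j k|) * b := by
  rw [Finset.sum_mul]
  refine (Finset.abs_sum_le_sum_abs _ _).trans (Finset.sum_le_sum fun k _ => ?_)
  rw [abs_mul]
  exact mul_le_mul_of_nonneg_left (hw k) (abs_nonneg _)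

theorem Matrix.abs_apply_le_of_abs_mulVec_le {n : Type*} [Fintype n] [DecidableEq n]
    {A : Matrix n n ℝ} (hA : IsUnit A.det) {v : n → ℝ} {b : ℝ} (hv : ∀ k, |(A *ᵥ v) k| ≤ b)
    (j : n) : |v j| ≤ (∑ k, |A⁻¹ j k|) * b := by
  simpa [Matrix.mulVec_mulVec, Matrix.nonsing_inv_mul _ hA] using A⁻¹.abs_mulVec_apply_le hv j

theorem Matrix.tendsto_inv_of_isUnit_det {n : Type*} [Fintype n] [DecidableEq n] {ι : Type*}
    {l : Filter ι} {A : ι → Matrix n n ℝ} {C : Matrix n n ℝ} (hA : Tendsto A l (𝓝 C))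
    (hC : IsUnit C.det) : Tendsto (fun i => (A i)⁻¹) l (𝓝 C⁻¹) := by
  refine (continuousAt_matrix_inv C ?_).tendsto.comp hA
  rw [Ring.inverse_eq_inv']
  exact continuousAt_inv₀ hC.ne_zero

theorem eventually_lt_mul_of_isLittleO {α : Type*} {l : Filter α} {f g : α → ℝ}
    (h : f =o[l] g) (hg : ∀ᶠ a in l, 0 < g a) {c : ℝ} (hc : 0 < c) :
    ∀ᶠ a in l, f a < c * g a := by
  have h' : f =o[l] fun a => c * g a := h.const_mul_right' (isUnit_iff_ne_zero.2 hc.ne')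
  filter_upwards [h'.eventuallyLT_norm_of_eventually_pos
    (hg.mono fun a ha => norm_pos_iff.2 (mul_pos hc ha).ne'), hg] with a ha hga
  rw [Real.norm_eq_abs, Real.norm_eq_abs, abs_of_pos (mul_pos hc hga)] at ha
  exact (le_abs_self _).trans_lt ha

section Dantzig

variable {n p : ℕ} (X : Matrix (Fin n) (Fin p) ℝ) (βs : Fin p → ℝ) (e : Fin n → ℝ) {δ : ℝ}

theorem transpose_mulVec_residual (β : Fin p → ℝ) :
    Xᵀ *ᵥ ((fun i => (X *ᵥ βs) i + e i) - X *ᵥ β) = (Xᵀ * X) *ᵥ (βs - β) + Xᵀ *ᵥ e := by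
  have h : (fun i => (X *ᵥ βs) i + e i) - X *ᵥ β = X *ᵥ (βs - β) + e := by
    ext i
    simp only [Pi.sub_apply, Pi.add_apply, Matrix.mulVec_sub]
    ring
  rw [h, Matrix.mulVec_add, Matrix.mulVec_mulVec]

variable {X βs e}

theorem feas_of_noise_le (he : ∀ j, |(Xᵀ *ᵥ e) j| ≤ δ) :
    Feas X (fun i => (X *ᵥ βs) i + e i) δ βs := by
  intro j
  simpa [transpose_mulVec_residual] using he j

theorem abs_sub_le_of_feas (hA : IsUnit (Xᵀ * X).det) (he : ∀ j, |(Xᵀ *ᵥ e) j| ≤ δ)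
    {β : Fin p → ℝ} (hβ : Feas X (fun i => (X *ᵥ βs) i + e i) δ β) (j : Fin p) :
    |βs j - β j| ≤ (∑ k, |(Xᵀ * X)⁻¹ j k|) * (2 * δ) := by
  refine Matrix.abs_apply_le_of_abs_mulVec_le (v := βs - β) hA (fun k => ?_) j
  have hk := hβ k
  rw [transpose_mulVec_residual, Pi.add_apply] at hk
  have htri := abs_sub (((Xᵀ * X) *ᵥ (βs - β)) k + (Xᵀ *ᵥ e) k) ((Xᵀ *ᵥ e) k)
  rw [add_sub_cancel_right] at htri
  linarith [he k]

theorem support_eq_of_noise_le (hA : IsUnit (Xᵀ * X).det) (he : ∀ j, |(Xᵀ *ᵥ e) j| ≤ δ)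
    (hsep : ∀ j, βs j ≠ 0 → (∑ k, |(Xᵀ * X)⁻¹ j k|) * (2 * δ) < |βs j|) {βhat : Fin p → ℝ}
    (hhat : Feas X (fun i => (X *ᵥ βs) i + e i) δ βhat ∧
      ∀ β, Feas X (fun i => (X *ᵥ βs) i + e i) δ β → l0 βhat ≤ l0 β) :
    {j | βhat j ≠ 0} = {j | βs j ≠ 0} := by
  refine support_eq_of_l0_minimal (feas_of_noise_le he) (fun β hβ j hj hβj => ?_) hhat
  have := abs_sub_le_of_feas hA he hβ j
  rw [hβj, sub_zero] at this
  exact (hsep j hj).not_ge this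

end Dantzig

theorem tendsto_measure_nhds_one_of_compl_subset {Ω α : Type*} [MeasurableSpace Ω]
    {P : Measure Ω} [IsProbabilityMeasure P] {l : Filter α} {s t : α → Set Ω}
    (hst : ∀ᶠ a in l, (s a)ᶜ ⊆ t a) (ht : Tendsto (fun a => P (t a)) l (𝓝 0)) :
    Tendsto (fun a => P (s a)) l (𝓝 1) := by
  have hcompl : Tendsto (fun a => P (s a)ᶜ) l (𝓝 0) :=
    tendsto_of_tendsto_of_tendsto_of_le_of_le' tendsto_const_nhds ht
      (Eventually.of_forall fun _ => zero_le) (hst.mono fun _ h => measure_mono h)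
  have hlow : Tendsto (fun a => 1 - P (s a)ᶜ) l (𝓝 1) := by
    simpa using ENNReal.Tendsto.sub tendsto_const_nhds hcompl (Or.inl ENNReal.one_ne_top)
  refine tendsto_of_tendsto_of_tendsto_of_le_of_le hlow tendsto_const_nhds (fun a => ?_)
    (fun _ => prob_le_one)
  rw [tsub_le_iff_right, ← measure_univ (μ := P)]
  exact measure_univ_le_add_compl _

section Noise

variable {Ω ι : Type*} [MeasurableSpace Ω] {P : Measure Ω} {ε : ι → Ω → ℝ} {σ2 : ℝ}

theorem variance_sum_mul_of_iIndepFun (hindep : iIndepFun ε P) (hL : ∀ i, MemLp (ε i) 2 P)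
    (hvar : ∀ i, variance (ε i) P = σ2) (s : Finset ι) (a : ι → ℝ) :
    variance (fun ω => ∑ i ∈ s, a i * ε i ω) P = (∑ i ∈ s, a i ^ 2) * σ2 := by
  have hsum : (fun ω => ∑ i ∈ s, a i * ε i ω) = ∑ i ∈ s, a i • ε i := by
    ext ω
    simp
  rw [hsum, IndepFun.variance_sum (fun i _ => (hL i).const_smul (a i)), Finset.sum_mul]
  · simp only [variance_smul, hvar]
  · intro i _ k _ hik
    exact (hindep.indepFun hik).comp (measurable_const_mul (a i)) (measurable_const_mul (a k))

theorem measure_exists_abs_transpose_mulVec_ge_le [Fintype ι] [IsFiniteMeasure P] {κ : Type*}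
    [Fintype κ] (X : Matrix ι κ ℝ) (hindep : iIndepFun ε P) (hL : ∀ i, MemLp (ε i) 2 P)
    (hmean : ∀ i, P[ε i] = 0) (hvar : ∀ i, variance (ε i) P = σ2) {δ : ℝ} (hδ : 0 < δ) :
    P {ω | ∃ j, δ ≤ |(Xᵀ *ᵥ fun i => ε i ω) j|}
      ≤ ∑ j, ENNReal.ofReal ((Xᵀ * X) j j * σ2 / δ ^ 2) := by
  have hcoord : ∀ j, P {ω | δ ≤ |(Xᵀ *ᵥ fun i => ε i ω) j|}
      ≤ ENNReal.ofReal ((Xᵀ * X) j j * σ2 / δ ^ 2) := by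
    intro j
    have hL' : MemLp (fun ω => ∑ i, X i j * ε i ω) 2 P :=
      memLp_finsetSum _ fun i _ => (hL i).const_mul (X i j)
    have hmean' : P[fun ω => ∑ i, X i j * ε i ω] = 0 := by
      rw [integral_finsetSum _ fun i _ => ((hL i).integrable one_le_two).const_mul (X i j)]
      simp [integral_const_mul, hmean]
    have h := meas_ge_le_variance_div_sq hL' hδ
    rw [hmean', variance_sum_mul_of_iIndepFun hindep hL hvar] at h
    simpa [Matrix.mulVec, dotProduct, Matrix.mul_apply, sq] using h
  calc P {ω | ∃ j, δ ≤ |(Xᵀ *ᵥ fun i => ε i ω) j|}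
      = P (⋃ j, {ω | δ ≤ |(Xᵀ *ᵥ fun i => ε i ω) j|}) := by rw [Set.ofPred_exists]
    _ ≤ ∑ j, P {ω | δ ≤ |(Xᵀ *ᵥ fun i => ε i ω) j|} := measure_iUnion_fintype_le _ _
    _ ≤ _ := Finset.sum_le_sum fun j _ => hcoord j

end Noise

theorem tendsto_measure_exists_abs_transpose_mulVec_ge {Ω κ : Type*} [MeasurableSpace Ω]
    {P : Measure Ω} [IsFiniteMeasure P] [Fintype κ] {ε : ℕ → Ω → ℝ} {σ2 : ℝ}
    (hindep : iIndepFun ε P) (hL : ∀ i, MemLp (ε i) 2 P) (hmean : ∀ i, P[ε i] = 0)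
    (hvar : ∀ i, variance (ε i) P = σ2) {X : (n : ℕ) → Matrix (Fin n) κ ℝ}
    {C : Matrix κ κ ℝ} (hXC : Tendsto (fun n => (X n)ᵀ * X n) atTop (𝓝 C)) {δ : ℕ → ℝ}
    (hδ : Tendsto δ atTop atTop) :
    Tendsto (fun n => P {ω | ∃ j, δ n ≤ |((X n)ᵀ *ᵥ fun i => ε i ω) j|}) atTop (𝓝 0) := by
  have hbound : Tendsto (fun n => ∑ j, ENNReal.ofReal (((X n)ᵀ * X n) j j * σ2 / δ n ^ 2))
      atTop (𝓝 0) := by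
    have hinv : Tendsto (fun n => (δ n ^ 2)⁻¹) atTop (𝓝 0) :=
      (hδ.atTop_mul_atTop₀ hδ).inv_tendsto_atTop.congr fun n => by simp [sq]
    have hdiag : ∀ j, Tendsto (fun n => ((X n)ᵀ * X n) j j) atTop (𝓝 (C j j)) :=
      fun j => ((continuous_apply_apply j j).tendsto C).comp hXC
    simpa [div_eq_mul_inv] using tendsto_finsetSum Finset.univ fun j _ =>
      ENNReal.tendsto_ofReal (((hdiag j).mul_const σ2).mul hinv)
  refine tendsto_of_tendsto_of_tendsto_of_le_of_le' tendsto_const_nhds hbound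
    (Eventually.of_forall fun _ => zero_le) ?_
  filter_upwards [hδ.eventually_gt_atTop 0] with n hδn
  exact measure_exists_abs_transpose_mulVec_ge_le (X n)
    (hindep.precomp Fin.val_injective) (fun i => hL i) (fun i => hmean i) (fun i => hvar i) hδn

theorem eventually_inv_entry_sum_mul_lt {m : Type*} [Fintype m] [DecidableEq m]
    {A : ℕ → Matrix m m ℝ} {C : Matrix m m ℝ} (hA : Tendsto A atTop (𝓝 C)) (hC : IsUnit C.det)
    {δ : ℕ → ℝ} (hδ : δ =o[atTop] fun n : ℕ => Real.sqrt n) (βt : m → ℝ) :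
    ∀ᶠ n : ℕ in atTop, ∀ j, Real.sqrt n * βt j ≠ 0 →
      (∑ k, |(A n)⁻¹ j k|) * (2 * δ n) < |Real.sqrt n * βt j| := by
  rw [eventually_all]
  intro j
  rcases eq_or_ne (βt j) 0 with hj | hj
  · simp [hj]
  have hK : Tendsto (fun n => ∑ k, |(A n)⁻¹ j k|) atTop (𝓝 (∑ k, |C⁻¹ j k|)) :=
    tendsto_finsetSum _ fun k _ =>
      (((continuous_apply_apply j k).tendsto _).comp (Matrix.tendsto_inv_of_isUnit_det hA hC)).abs
  have ho : (fun n => (∑ k, |(A n)⁻¹ j k|) * (2 * δ n)) =o[atTop] fun n : ℕ => Real.sqrt n := by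
    simpa using (hK.isBigO_one ℝ).mul_isLittleO (hδ.const_mul_left 2)
  have hsqrt : ∀ᶠ n : ℕ in atTop, 0 < Real.sqrt n :=
    (eventually_gt_atTop 0).mono fun n hn => Real.sqrt_pos.2 (Nat.cast_pos.2 hn)
  filter_upwards [eventually_lt_mul_of_isLittleO ho hsqrt (abs_pos.2 hj), hsqrt] with n hn hn0 _
  rwa [abs_mul, abs_of_pos hn0, mul_comm (Real.sqrt n)]

theorem stmt10_general {Ω : Type*} [MeasurableSpace Ω] (P : Measure Ω) [IsProbabilityMeasure P]
    {p : ℕ} (βt : Fin p → ℝ)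
    (X : (n : ℕ) → Matrix (Fin n) (Fin p) ℝ)
    (ε : ℕ → Ω → ℝ) (hmeas : ∀ i, Measurable (ε i))
    (hindep : iIndepFun ε P)
    (hident : ∀ i, Measure.map (ε i) P = Measure.map (ε 0) P)
    (hmean : ∫ ω, ε 0 ω ∂P = 0)
    (hvar : MemLp (ε 0) 2 P)
    (C : Matrix (Fin p) (Fin p) ℝ) (hC : IsUnit C.det)
    (hXC : Tendsto (fun n => (X n).transpose * (X n)) atTop (nhds C))
    (δ : ℕ → ℝ) (hδ_inf : Tendsto δ atTop atTop)
    (hδ_o : δ =o[atTop] fun n : ℕ => Real.sqrt n) :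
    Tendsto (fun n => P {ω | ∀ βhat : Fin p → ℝ,
        (Feas (X n) (fun i => (X n).mulVec (fun j => Real.sqrt n * βt j) i + ε i ω)
            (δ n) βhat ∧
          ∀ β : Fin p → ℝ,
            Feas (X n) (fun i => (X n).mulVec (fun j => Real.sqrt n * βt j) i + ε i ω)
              (δ n) β → l0 βhat ≤ l0 β) →
        {j : Fin p | βhat j ≠ 0} = {j : Fin p | βt j ≠ 0}})
      atTop (nhds 1) := by
  have hiid : ∀ i, IdentDistrib (ε i) (ε 0) P P :=
    fun i => ⟨(hmeas i).aemeasurable, (hmeas 0).aemeasurable, hident i⟩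
  have hnoise := tendsto_measure_exists_abs_transpose_mulVec_ge hindep
    (fun i => (hiid i).memLp_iff.2 hvar) (fun i => (hiid i).integral_eq.trans hmean)
    (fun i => (hiid i).variance_eq) hXC hδ_inf
  have hdet : ∀ᶠ n in atTop, IsUnit ((X n)ᵀ * X n).det :=
    (((continuous_id.matrix_det.tendsto C).comp hXC).eventually_ne hC.ne_zero).mono
      fun _ h => isUnit_iff_ne_zero.2 h
  refine tendsto_measure_nhds_one_of_compl_subset ?_ hnoise
  filter_upwards [hdet, eventually_inv_entry_sum_mul_lt hXC hC hδ_o βt,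
    eventually_gt_atTop 0] with n hdet_n hsep hn
  refine Set.compl_subset_comm.2 fun ω hω βhat hhat => ?_
  simp only [Set.mem_compl_iff, Set.mem_ofPred_eq, not_exists, not_le] at hω
  have hsupp : {j | Real.sqrt n * βt j ≠ 0} = {j | βt j ≠ 0} := by
    simp [(Real.sqrt_pos.2 (Nat.cast_pos.2 hn)).ne']
  exact hsupp ▸ support_eq_of_noise_le hdet_n (fun j => (hω j).le) hsep hhat

/-- Fixed-`p` asymptotics for support recovery: with `β*ₙ = √n β̃*`,
i.i.d. mean-zero finite-variance errors, `XₙᵀXₙ → C` invertible, `δₙ → ∞` and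
`δₙ = o(√n)`, the probability that every Discrete Dantzig Selector solution has
support `J* = supp β̃*` tends to one. -/
theorem stmt10 {Ω : Type*} [MeasurableSpace Ω] (P : Measure Ω) [IsProbabilityMeasure P]
    {p : ℕ} (βt : Fin p → ℝ)
    (X : (n : ℕ) → Matrix (Fin n) (Fin p) ℝ)
    (ε : ℕ → Ω → ℝ) (hmeas : ∀ i, Measurable (ε i))
    (hindep : iIndepFun ε P)
    (hident : ∀ i, Measure.map (ε i) P = Measure.map (ε 0) P)
    (hint : Integrable (ε 0) P) (hmean : ∫ ω, ε 0 ω ∂P = 0)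
    (hvar : MemLp (ε 0) 2 P)
    (C : Matrix (Fin p) (Fin p) ℝ) (hC : IsUnit C.det)
    (hXC : Tendsto (fun n => (X n).transpose * (X n)) atTop (nhds C))
    (δ : ℕ → ℝ) (hδ_inf : Tendsto δ atTop atTop)
    (hδ_o : δ =o[atTop] fun n : ℕ => Real.sqrt n) :
    Tendsto (fun n => P {ω | ∀ βhat : Fin p → ℝ,
        (Feas (X n) (fun i => (X n).mulVec (fun j => Real.sqrt n * βt j) i + ε i ω)
            (δ n) βhat ∧
          ∀ β : Fin p → ℝ,
            Feas (X n) (fun i => (X n).mulVec (fun j => Real.sqrt n * βt j) i + ε i ω)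
              (δ n) β → l0 βhat ≤ l0 β) →
        {j : Fin p | βhat j ≠ 0} = {j : Fin p | βt j ≠ 0}})
      atTop (nhds 1) :=
  stmt10_general P βt X ε hmeas hindep hident hmean hvar C hC hXC δ hδ_inf hδ_o
end
end

section
/- (Fixed-p asymptotics, truth and oracle are solutions.) Fix p and a vector β̃* ∈ ℝ^p with support J* = { j : β̃*_j ≠ 0 }. For each n, let Xₙ ∈ ℝ^{n×p} be a design matrix, set β*ₙ = n^{1/2} β̃*, and let yₙ = Xₙ β*ₙ + (ε₁,…,εₙ)ᵀ, where ε₁, ε₂, … are i.i.d. real random variables with mean zero and finite variance. Assume XₙᵀXₙ converges to an invertible matrix C as n → ∞, and let δₙ be a sequence with δₙ → ∞ and δₙ = o(n^{1/2}). Then the probability of the event that both β*ₙ and the Oracle estimator β̂ᴼₙ belong to the set of solutions of the Discrete Dantzig Selector problem with data (Xₙ, yₙ) and parameter δₙ tends to one as n → ∞. -/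
/-!
Write `G = XᵀX → C` and `e = (ε₁,…,εₙ)`. Chebyshev's inequality gives `‖Xᵀe‖∞ = O_P(1)`, so
`‖Xᵀe‖∞ ≤ δ/(1 + K)` with probability tending to one, for any constant `K`. On that event
the truth `β* = √n β̃*` is feasible, and every feasible `β'` has `‖G(β* - β')‖∞ ≤ 2δ`, hence
`‖β* - β'‖∞ = O(δ) = o(√n)`; so `β'` is nonzero wherever `β*` is, and `β*` has minimal support.
With `J` the support of `β̃*`, the Oracle estimator has residual `e - X_J (X_JᵀX_J)⁻¹ X_Jᵀ e`,
so its constraint value is at most `(1 + K)‖Xᵀe‖∞ ≤ δ`, where `K` bounds `G_{·J} G_{JJ}⁻¹`; its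
support lies in `J`, hence it is a solution too. The limit `C` is positive semidefinite and invertible, so `C_{JJ}` is
invertible, and `G⁻¹` and `G_{·J} G_{JJ}⁻¹` converge, hence are eventually bounded.
-/

noncomputable section
open Classical MeasureTheory ProbabilityTheory Filter Asymptotics

/-- `β` is a solution of the Discrete Dantzig Selector problem with data `(X, y, δ)`. -/
def IsDDSSol {n p : ℕ} (X : Matrix (Fin n) (Fin p) ℝ) (y : Fin n → ℝ) (δ : ℝ)
    (β : Fin p → ℝ) : Prop :=
  Feas X y δ β ∧ ∀ β' : Fin p → ℝ, Feas X y δ β' → l0 β ≤ l0 β'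

/-- The least-squares estimator restricted to the columns in `J`, viewed as a vector in
`ℝ^p` supported on `J`: on `J` it equals `(X_Jᵀ X_J)⁻¹ X_Jᵀ y`. -/
def restrictedLS {n p : ℕ} (J : Finset (Fin p)) (X : Matrix (Fin n) (Fin p) ℝ)
    (y : Fin n → ℝ) : Fin p → ℝ :=
  fun j =>
    if h : j ∈ J then
      (((X.submatrix id (Subtype.val : {x // x ∈ J} → Fin p)).transpose *
            X.submatrix id (Subtype.val : {x // x ∈ J} → Fin p))⁻¹.mulVec
          ((X.submatrix id (Subtype.val : {x // x ∈ J} → Fin p)).transpose.mulVec y))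
        ⟨j, h⟩
    else 0

open scoped Topology

namespace Matrix

variable {ι m n : Type*} {l : Filter ι}

theorem mulVec_eq_submatrix_mulVec {α : Type*} [NonUnitalNonAssocSemiring α] [Fintype n]
    (M : Matrix m n α) {s : Finset n} {v : n → α} (hv : ∀ j ∉ s, v j = 0) :
    M *ᵥ v = M.submatrix id ((↑) : s → n) *ᵥ fun j => v j := by
  ext i
  simp only [mulVec, dotProduct, submatrix_apply, id]
  rw [Finset.sum_coe_sort s fun j => M i j * v j]
  exact (Finset.sum_subset s.subset_univ fun j _ hj => by simp [hv j hj]).symm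

theorem transpose_mul_submatrix_id {α : Type*} [NonUnitalNonAssocSemiring α] [Fintype m]
    (X : Matrix m n α) {k : Type*} (e : k → n) :
    Xᵀ * X.submatrix id e = (Xᵀ * X).submatrix id e := by
  ext i j
  simp [mul_apply]

theorem transpose_submatrix_mul_submatrix {α : Type*} [NonUnitalNonAssocSemiring α] [Fintype m]
    (X : Matrix m n α) {k : Type*} (e : k → n) :
    (X.submatrix id e)ᵀ * X.submatrix id e = (Xᵀ * X).submatrix e e := by
  ext i j
  simp [mul_apply]

theorem _root_.Filter.Tendsto.exists_eventually_norm_mulVec_le [Fintype m] [Fintype n]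
    {M : ι → Matrix m n ℝ} {L : Matrix m n ℝ} (h : Tendsto M l (𝓝 L)) :
    ∃ K, 0 < K ∧ ∀ᶠ k in l, ∀ v, ‖M k *ᵥ v‖ ≤ K * ‖v‖ := by
  let T : Matrix m n ℝ →ₗ[ℝ] (n → ℝ) →L[ℝ] (m → ℝ) :=
    LinearMap.toContinuousLinearMap.toLinearMap ∘ₗ Matrix.toLin'.toLinearMap
  have hT : Tendsto (fun k => ‖T (M k)‖) l (𝓝 ‖T L‖) :=
    ((T.continuous_of_finiteDimensional.tendsto L).comp h).norm
  refine ⟨‖T L‖ + 1, by positivity, ?_⟩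
  filter_upwards [hT.eventually (gt_mem_nhds (lt_add_one _))] with k hk v
  exact ((T (M k)).le_opNorm v).trans (by gcongr)

variable [Fintype n]

theorem PosSemidef.of_tendsto [l.NeBot] {G : ι → Matrix n n ℝ} {L : Matrix n n ℝ}
    (hG : ∀ k, (G k).PosSemidef) (h : Tendsto G l (𝓝 L)) : L.PosSemidef := by
  refine .of_dotProduct_mulVec_nonneg ?_ fun x => ?_
  · refine tendsto_nhds_unique ?_ h
    have := (continuous_id.matrix_conjTranspose.tendsto L).comp h
    simpa only [Function.comp_def, id, (hG _).1.eq] using this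
  · exact ge_of_tendsto' (((continuous_const.dotProduct
      (continuous_id.matrix_mulVec continuous_const)).tendsto L).comp h)
      fun k => (hG k).dotProduct_mulVec_nonneg x

theorem _root_.Filter.Tendsto.matrix_inv [DecidableEq n] {G : ι → Matrix n n ℝ}
    {L : Matrix n n ℝ} (h : Tendsto G l (𝓝 L)) (hL : IsUnit L.det) :
    Tendsto (fun k => (G k)⁻¹) l (𝓝 L⁻¹) :=
  (continuousAt_matrix_inv L (NormedRing.inverse_continuousAt hL.unit)).tendsto.comp h

theorem _root_.Filter.Tendsto.eventually_isUnit_det [DecidableEq n] {G : ι → Matrix n n ℝ}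
    {L : Matrix n n ℝ} (h : Tendsto G l (𝓝 L)) (hL : IsUnit L.det) : ∀ᶠ k in l, IsUnit (G k).det :=
  ((continuous_id.matrix_det.tendsto L).comp h).eventually
    (isOpen_ne.mem_nhds hL.ne_zero) |>.mono fun _ hk => isUnit_iff_ne_zero.mpr hk

theorem PosSemidef.isUnit_det_submatrix [DecidableEq n] {L : Matrix n n ℝ} (hL : L.PosSemidef)
    (hdet : IsUnit L.det) {k : Type*} [Fintype k] [DecidableEq k] {e : k → n}
    (he : Function.Injective e) : IsUnit (L.submatrix e e).det :=
  (isUnit_iff_isUnit_det _).mp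
    ((hL.posDef_iff_isUnit.mpr ((isUnit_iff_isUnit_det L).mpr hdet)).submatrix he).isUnit

theorem _root_.Filter.Tendsto.exists_eventually_norm_inv_mulVec_le [DecidableEq n]
    {G : ι → Matrix n n ℝ} {L : Matrix n n ℝ} (h : Tendsto G l (𝓝 L)) (hL : IsUnit L.det) :
    ∃ K, 0 < K ∧ ∀ᶠ k in l, IsUnit (G k).det ∧ ∀ v, ‖(G k)⁻¹ *ᵥ v‖ ≤ K * ‖v‖ := by
  obtain ⟨K, hK, hbound⟩ := (h.matrix_inv hL).exists_eventually_norm_mulVec_le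
  exact ⟨K, hK, (h.eventually_isUnit_det hL).and hbound⟩

theorem _root_.Filter.Tendsto.exists_eventually_norm_submatrix_mul_inv_mulVec_le
    {G : ι → Matrix n n ℝ} {L : Matrix n n ℝ} (h : Tendsto G l (𝓝 L)) {k : Type*} [Fintype k]
    [DecidableEq k] {e : k → n} (hL : IsUnit (L.submatrix e e).det) :
    ∃ K, 0 < K ∧ ∀ᶠ i in l, IsUnit ((G i).submatrix e e).det ∧
      ∀ v, ‖((G i).submatrix id e * ((G i).submatrix e e)⁻¹) *ᵥ v‖ ≤ K * ‖v‖ := by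
  have hcols : Tendsto (fun i => (G i).submatrix id e) l (𝓝 (L.submatrix id e)) :=
    ((continuous_id.matrix_submatrix id e).tendsto L).comp h
  have hblock : Tendsto (fun i => (G i).submatrix e e) l (𝓝 (L.submatrix e e)) :=
    ((continuous_id.matrix_submatrix e e).tendsto L).comp h
  have hprod := ((continuous_fst.matrix_mul continuous_snd).tendsto _).comp
    (hcols.prodMk_nhds (hblock.matrix_inv hL))
  obtain ⟨K, hK, hbound⟩ := hprod.exists_eventually_norm_mulVec_le
  exact ⟨K, hK, (hblock.eventually_isUnit_det hL).and hbound⟩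

end Matrix

theorem eventually_mul_lt_abs_sqrt_mul {ι : Type*} [Finite ι] (b : ι → ℝ) {δ : ℕ → ℝ}
    (hδ : δ =o[atTop] fun n : ℕ => √n) (c : ℝ) :
    ∀ᶠ n : ℕ in atTop, ∀ j, b j ≠ 0 → c * δ n < |√n * b j| := by
  refine eventually_all.mpr fun j => ?_
  by_cases hj : b j = 0
  · exact .of_forall fun _ h => absurd hj h
  have hpos : ∀ᶠ n : ℕ in atTop, 0 < ‖b j * √n‖ := by
    filter_upwards [eventually_gt_atTop 0] with n hn
    exact norm_pos_iff.mpr (mul_ne_zero hj (Real.sqrt_ne_zero'.mpr (Nat.cast_pos.mpr hn)))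
  filter_upwards [((hδ.const_mul_left c).trans_isBigO
    (isBigO_self_const_mul hj _ _)).eventuallyLT_norm_of_eventually_pos hpos] with n hn _
  rw [Real.norm_eq_abs, Real.norm_eq_abs, mul_comm (b j)] at hn
  exact (le_abs_self _).trans_lt hn

section DiscreteDantzigSelector

open Matrix

variable {n p : ℕ} {X : Matrix (Fin n) (Fin p) ℝ} {y e : Fin n → ℝ} {δ : ℝ}
  {β β' : Fin p → ℝ}

theorem feas_iff_norm_le (hδ : 0 ≤ δ) : Feas X y δ β ↔ ‖Xᵀ *ᵥ (y - X *ᵥ β)‖ ≤ δ := by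
  simp only [Feas, pi_norm_le_iff_of_nonneg hδ, Real.norm_eq_abs, transpose]

theorem l0_le_l0_of_support_subset (h : ∀ j, β j ≠ 0 → β' j ≠ 0) : l0 β ≤ l0 β' :=
  Finset.card_le_card fun j hj => by simp_all

theorem IsDDSSol.of_support_subset (hβ : IsDDSSol X y δ β) (hβ' : Feas X y δ β')
    (h : ∀ j, β' j ≠ 0 → β j ≠ 0) : IsDDSSol X y δ β' :=
  ⟨hβ', fun β'' hβ'' => (l0_le_l0_of_support_subset h).trans (hβ.2 β'' hβ'')⟩

theorem norm_sub_le_of_feas (hG : IsUnit (Xᵀ * X).det)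
    {K : ℝ} (hK0 : 0 ≤ K) (hK : ∀ w, ‖(Xᵀ * X)⁻¹ *ᵥ w‖ ≤ K * ‖w‖) (he : ‖Xᵀ *ᵥ e‖ ≤ δ)
    (hβ' : Feas X (X *ᵥ β + e) δ β') : ‖β - β'‖ ≤ 2 * K * δ := by
  have hδ : 0 ≤ δ := (norm_nonneg _).trans he
  have hsplit : (Xᵀ * X) *ᵥ (β - β') = Xᵀ *ᵥ (X *ᵥ β + e - X *ᵥ β') - Xᵀ *ᵥ e := by
    simp only [← mulVec_mulVec, mulVec_sub, mulVec_add]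
    abel
  calc ‖β - β'‖ = ‖(Xᵀ * X)⁻¹ *ᵥ ((Xᵀ * X) *ᵥ (β - β'))‖ := by
        rw [mulVec_mulVec, nonsing_inv_mul _ hG, one_mulVec]
    _ ≤ K * ‖(Xᵀ * X) *ᵥ (β - β')‖ := hK _
    _ ≤ K * (δ + δ) := by
        rw [hsplit]
        gcongr
        exact (norm_sub_le _ _).trans (add_le_add ((feas_iff_norm_le hδ).mp hβ') he)
    _ = 2 * K * δ := by ring

theorem isDDSSol_of_beta_min (hG : IsUnit (Xᵀ * X).det) {K : ℝ} (hK0 : 0 ≤ K)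
    (hK : ∀ w, ‖(Xᵀ * X)⁻¹ *ᵥ w‖ ≤ K * ‖w‖) (he : ‖Xᵀ *ᵥ e‖ ≤ δ)
    (hmin : ∀ j, β j ≠ 0 → 2 * K * δ < |β j|) : IsDDSSol X (X *ᵥ β + e) δ β := by
  have hδ : 0 ≤ δ := (norm_nonneg _).trans he
  refine ⟨(feas_iff_norm_le hδ).mpr (by rwa [add_sub_cancel_left]),
    fun β' hβ' => l0_le_l0_of_support_subset fun j hj hj' => ?_⟩
  have := (norm_le_pi_norm (β - β') j).trans (norm_sub_le_of_feas hG hK0 hK he hβ')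
  rw [Pi.sub_apply, hj', sub_zero, Real.norm_eq_abs] at this
  linarith [hmin j hj]

theorem feas_restrictedLS {J : Finset (Fin p)} (hβ : ∀ j ∉ J, β j = 0)
    (hGJ : IsUnit ((Xᵀ * X).submatrix ((↑) : J → Fin p) ((↑) : J → Fin p)).det)
    {K : ℝ} (hK0 : 0 ≤ K)
    (hK : ∀ w, ‖((Xᵀ * X).submatrix id ((↑) : J → Fin p) *
      ((Xᵀ * X).submatrix ((↑) : J → Fin p) ((↑) : J → Fin p))⁻¹) *ᵥ w‖ ≤ K * ‖w‖)
    (he : (1 + K) * ‖Xᵀ *ᵥ e‖ ≤ δ) :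
    Feas X (X *ᵥ β + e) δ (restrictedLS J X (X *ᵥ β + e)) := by
  set A := X.submatrix id ((↑) : J → Fin p)
  have hAA : Aᵀ * A = (Xᵀ * X).submatrix (↑) (↑) := X.transpose_submatrix_mul_submatrix _
  have hXA : Xᵀ * A = (Xᵀ * X).submatrix id (↑) := X.transpose_mul_submatrix_id _
  have hy : X *ᵥ β + e = A *ᵥ (fun j => β j) + e := by rw [X.mulVec_eq_submatrix_mulVec hβ]
  set y := X *ᵥ β + e
  have hLS : (fun j : J => restrictedLS J X y j) = (Aᵀ * A)⁻¹ *ᵥ (Aᵀ *ᵥ y) :=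
    funext fun j => dif_pos j.2
  have hXβo : X *ᵥ restrictedLS J X y =
      A *ᵥ (fun j => β j) + A *ᵥ ((Aᵀ * A)⁻¹ *ᵥ (Aᵀ *ᵥ e)) := by
    rw [X.mulVec_eq_submatrix_mulVec (v := restrictedLS J X y) fun j hj => dif_neg hj, hLS, hy]
    simp only [mulVec_add, mulVec_mulVec, nonsing_inv_mul _ (hAA ▸ hGJ),
      Matrix.mul_one]
    rfl
  have hres : Xᵀ *ᵥ (y - X *ᵥ restrictedLS J X y) =
      Xᵀ *ᵥ e - (Xᵀ * A * (Aᵀ * A)⁻¹) *ᵥ (Aᵀ *ᵥ e) := by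
    rw [hXβo, hy, add_sub_add_left_eq_sub, mulVec_sub, mulVec_mulVec, mulVec_mulVec,
      Matrix.mul_assoc]
  have hAe : ‖Aᵀ *ᵥ e‖ ≤ ‖Xᵀ *ᵥ e‖ :=
    (pi_norm_le_iff_of_nonneg (norm_nonneg _)).mpr fun j => norm_le_pi_norm (Xᵀ *ᵥ e) j
  rw [feas_iff_norm_le ((by positivity : (0 : ℝ) ≤ (1 + K) * ‖Xᵀ *ᵥ e‖).trans he), hres]
  calc _ ≤ ‖Xᵀ *ᵥ e‖ + K * ‖Aᵀ *ᵥ e‖ := by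
        refine (norm_sub_le _ _).trans (add_le_add_right ?_ _)
        rw [hXA, hAA]
        exact hK _
    _ ≤ δ := by nlinarith

end DiscreteDantzigSelector

section Probability

open Matrix

variable {Ω : Type*} [MeasurableSpace Ω] {P : Measure Ω} [IsProbabilityMeasure P]

theorem tendsto_measure_of_tendsto_measure_compl {ι : Type*} {l : Filter ι} {s : ι → Set Ω}
    (h : Tendsto (fun k => P (s k)ᶜ) l (𝓝 0)) : Tendsto (fun k => P (s k)) l (𝓝 1) := by
  have h1 : Tendsto (fun k => 1 - P (s k)ᶜ) l (𝓝 1) := by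
    simpa using ENNReal.Tendsto.sub tendsto_const_nhds h (.inl ENNReal.one_ne_top)
  refine tendsto_of_tendsto_of_tendsto_of_le_of_le h1 tendsto_const_nhds (fun k => ?_)
    fun _ => prob_le_one
  rw [tsub_le_iff_right, ← measure_univ (μ := P), ← Set.union_compl_self (s k)]
  exact measure_union_le _ _

theorem meas_le_abs_sum_mul_le {ι : Type*} [Fintype ι] {ε : ι → Ω → ℝ} {ξ : Ω → ℝ}
    (hindep : iIndepFun ε P) (hident : ∀ i, IdentDistrib (ε i) ξ P P) (hξ : MemLp ξ 2 P)
    (hmean : P[ξ] = 0) (a : ι → ℝ) {c : ℝ} (hc : 0 < c) :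
    P {ω | c ≤ |∑ i, a i * ε i ω|} ≤
      ENNReal.ofReal ((∑ i, a i ^ 2) * variance ξ P / c ^ 2) := by
  set f : ι → Ω → ℝ := fun i ω => a i * ε i ω
  have hf : ∀ i, MemLp (f i) 2 P := fun i => ((hident i).memLp_iff.mpr hξ).const_mul (a i)
  have hmean_sum : P[∑ i, f i] = 0 := by
    simp only [Finset.sum_apply]
    rw [integral_finsetSum _ fun i _ => (hf i).integrable one_le_two]
    simp [f, integral_const_mul, (hident _).integral_eq, hmean]
  have hvar : variance (∑ i, f i) P = (∑ i, a i ^ 2) * variance ξ P := by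
    rw [IndepFun.variance_sum (fun i _ => hf i) fun i _ j _ hij =>
      (hindep.indepFun hij).comp (measurable_const_mul _) (measurable_const_mul _),
      Finset.sum_mul]
    simp only [f, variance_const_mul, (hident _).variance_eq]
  have := meas_ge_le_variance_div_sq (memLp_finsetSum' Finset.univ fun i _ => hf i) hc
  rw [hmean_sum, hvar] at this
  simpa [f] using this

theorem tendsto_measure_norm_transpose_mulVec_le {p : ℕ} {ε : ℕ → Ω → ℝ} {ξ : Ω → ℝ}
    (hindep : iIndepFun ε P) (hident : ∀ i, IdentDistrib (ε i) ξ P P) (hξ : MemLp ξ 2 P)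
    (hmean : P[ξ] = 0) {X : (n : ℕ) → Matrix (Fin n) (Fin p) ℝ}
    (hX : ∀ j, IsBoundedUnder (· ≤ ·) atTop fun n => ((X n)ᵀ * X n) j j) {η : ℕ → ℝ}
    (hη : Tendsto η atTop atTop) :
    Tendsto (fun n => P {ω | ‖(X n)ᵀ *ᵥ (fun i : Fin n => ε i ω)‖ ≤ η n}) atTop (𝓝 1) := by
  have hcoord : ∀ j, Tendsto (fun n => P {ω | η n ≤ |∑ i : Fin n, X n i j * ε i ω|})
      atTop (𝓝 0) := by
    intro j
    obtain ⟨K, hK⟩ := hX j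
    have hlim : Tendsto (fun n => K * variance ξ P / η n ^ 2) atTop (𝓝 0) :=
      tendsto_const_nhds.div_atTop ((tendsto_pow_atTop two_ne_zero).comp hη)
    refine tendsto_of_tendsto_of_tendsto_of_le_of_le' tendsto_const_nhds
      (ENNReal.ofReal_zero ▸ (ENNReal.continuous_ofReal.tendsto 0).comp hlim)
      (.of_forall fun _ => zero_le) ?_
    filter_upwards [eventually_map.mp hK, hη.eventually_gt_atTop 0] with n hKn hηn
    refine (meas_le_abs_sum_mul_le (hindep.precomp Fin.val_injective) (fun i => hident i) hξ
      hmean _ hηn).trans (ENNReal.ofReal_le_ofReal ?_)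
    have hjj : ∑ i, X n i j ^ 2 = ((X n)ᵀ * X n) j j := by simp [Matrix.mul_apply, sq]
    rw [hjj]
    exact div_le_div_of_nonneg_right (mul_le_mul_of_nonneg_right hKn (variance_nonneg _ _))
      (by positivity)
  refine tendsto_measure_of_tendsto_measure_compl ?_
  have hsum := tendsto_finsetSum Finset.univ fun j _ => hcoord j
  rw [Finset.sum_const_zero] at hsum
  refine tendsto_of_tendsto_of_tendsto_of_le_of_le' tendsto_const_nhds hsum
    (.of_forall fun _ => zero_le) ?_
  filter_upwards [hη.eventually_ge_atTop 0] with n hηn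
  refine (measure_mono fun ω hω => ?_).trans (measure_iUnion_fintype_le _ _)
  simp only [Set.mem_compl_iff, Set.mem_ofPred_eq, pi_norm_le_iff_of_nonneg hηn,
    not_forall, not_le] at hω
  obtain ⟨j, hj⟩ := hω
  exact Set.mem_iUnion.mpr ⟨j, hj.le⟩

end Probability

theorem stmt11_general {Ω : Type*} [MeasurableSpace Ω] (P : Measure Ω) [IsProbabilityMeasure P]
    {p : ℕ} (βt : Fin p → ℝ)
    (X : (n : ℕ) → Matrix (Fin n) (Fin p) ℝ)
    (ε : ℕ → Ω → ℝ) (hmeas : ∀ i, Measurable (ε i))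
    (hindep : iIndepFun ε P)
    (hident : ∀ i, Measure.map (ε i) P = Measure.map (ε 0) P)
    (hmean : ∫ ω, ε 0 ω ∂P = 0)
    (hvar : MemLp (ε 0) 2 P)
    (C : Matrix (Fin p) (Fin p) ℝ) (hC : IsUnit C.det)
    (hXC : Tendsto (fun n => (X n).transpose * (X n)) atTop (nhds C))
    (δ : ℕ → ℝ) (hδ_inf : Tendsto δ atTop atTop)
    (hδ_o : δ =o[atTop] fun n : ℕ => Real.sqrt n) :
    Tendsto (fun n => P {ω |
        IsDDSSol (X n) (fun i => (X n).mulVec (fun j => Real.sqrt n * βt j) i + ε i ω)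
          (δ n) (fun j => Real.sqrt n * βt j) ∧
        IsDDSSol (X n) (fun i => (X n).mulVec (fun j => Real.sqrt n * βt j) i + ε i ω)
          (δ n)
          (restrictedLS (Finset.univ.filter fun j => βt j ≠ 0) (X n)
            (fun i => (X n).mulVec (fun j => Real.sqrt n * βt j) i + ε i ω))})
      atTop (nhds 1) := by
  set J := Finset.univ.filter fun j => βt j ≠ 0
  have hidentDistrib : ∀ i, IdentDistrib (ε i) (ε 0) P P :=
    fun i => ⟨(hmeas i).aemeasurable, (hmeas 0).aemeasurable, hident i⟩
  have hCpsd : C.PosSemidef := .of_tendsto (fun n => by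
    simpa using Matrix.posSemidef_conjTranspose_mul_self (X n)) hXC
  obtain ⟨K₁, hK₁, hinv⟩ := hXC.exists_eventually_norm_inv_mulVec_le hC
  obtain ⟨K₂, hK₂, horacle⟩ := hXC.exists_eventually_norm_submatrix_mul_inv_mulVec_le
    (hCpsd.isUnit_det_submatrix hC (Subtype.val_injective (p := (· ∈ J))))
  have hprob := tendsto_measure_norm_transpose_mulVec_le hindep hidentDistrib hvar hmean
    (fun j => ((hXC.apply_nhds j).apply_nhds j).isBoundedUnder_le)
    (hδ_inf.atTop_div_const (by positivity : (0 : ℝ) < 1 + K₂))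
  refine tendsto_of_tendsto_of_tendsto_of_le_of_le' hprob tendsto_const_nhds ?_
    (.of_forall fun _ => prob_le_one)
  filter_upwards [hinv, horacle, eventually_mul_lt_abs_sqrt_mul βt hδ_o (2 * K₁),
    eventually_gt_atTop 0] with n ⟨hG, hGinv⟩ ⟨hGJ, hGJinv⟩ hmin hn
  refine measure_mono fun ω hω => ?_
  have he : (1 + K₂) * ‖(X n).transpose.mulVec (fun i : Fin n => ε i ω)‖ ≤ δ n := by
    rwa [mul_comm, ← le_div_iff₀ (by positivity)]
  have htruth := isDDSSol_of_beta_min hG hK₁.le hGinv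
    ((le_mul_of_one_le_left (norm_nonneg _) (by linarith)).trans he)
    fun j hj => hmin j (right_ne_zero_of_mul hj)
  refine ⟨htruth, htruth.of_support_subset
    (feas_restrictedLS (fun j hj => ?_) hGJ hK₂.le hGJinv he) fun j hj => ?_⟩
  · simp [show βt j = 0 by simpa [J] using hj]
  · have hjJ : j ∈ J := by_contra fun h => hj (dif_neg h)
    exact mul_ne_zero (Real.sqrt_ne_zero'.mpr (Nat.cast_pos.mpr hn)) (Finset.mem_filter.mp hjJ).2

/-- Fixed-`p` asymptotics: with probability tending to one, both the true
coefficient vector `β*ₙ = √n β̃*` and the Oracle estimator belong to the set of solutions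
of the Discrete Dantzig Selector problem. -/
theorem stmt11 {Ω : Type*} [MeasurableSpace Ω] (P : Measure Ω) [IsProbabilityMeasure P]
    {p : ℕ} (βt : Fin p → ℝ)
    (X : (n : ℕ) → Matrix (Fin n) (Fin p) ℝ)
    (ε : ℕ → Ω → ℝ) (hmeas : ∀ i, Measurable (ε i))
    (hindep : iIndepFun ε P)
    (hident : ∀ i, Measure.map (ε i) P = Measure.map (ε 0) P)
    (hint : Integrable (ε 0) P) (hmean : ∫ ω, ε 0 ω ∂P = 0)
    (hvar : MemLp (ε 0) 2 P)
    (C : Matrix (Fin p) (Fin p) ℝ) (hC : IsUnit C.det)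
    (hXC : Tendsto (fun n => (X n).transpose * (X n)) atTop (nhds C))
    (δ : ℕ → ℝ) (hδ_inf : Tendsto δ atTop atTop)
    (hδ_o : δ =o[atTop] fun n : ℕ => Real.sqrt n) :
    Tendsto (fun n => P {ω |
        IsDDSSol (X n) (fun i => (X n).mulVec (fun j => Real.sqrt n * βt j) i + ε i ω)
          (δ n) (fun j => Real.sqrt n * βt j) ∧
        IsDDSSol (X n) (fun i => (X n).mulVec (fun j => Real.sqrt n * βt j) i + ε i ω)
          (δ n)
          (restrictedLS (Finset.univ.filter fun j => βt j ≠ 0) (X n)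
            (fun i => (X n).mulVec (fun j => Real.sqrt n * βt j) i + ε i ω))})
      atTop (nhds 1) :=
  stmt11_general P βt X ε hmeas hindep hident hmean hvar C hC hXC δ hδ_inf hδ_o
end
end

section
/- (Polished estimator equals the Oracle.) Fix p and a vector β̃* ∈ ℝ^p with support J* = { j : β̃*_j ≠ 0 }. For each n, let Xₙ ∈ ℝ^{n×p} be a design matrix, set β*ₙ = n^{1/2} β̃*, and let yₙ = Xₙ β*ₙ + (ε₁,…,εₙ)ᵀ, where ε₁, ε₂, … are i.i.d. real random variables with mean zero and finite variance. Assume XₙᵀXₙ converges to an invertible matrix C as n → ∞, and let δₙ be a sequence with δₙ → ∞ and δₙ = o(n^{1/2}). Then the probability of the event that, for every solution β̂ of the Discrete Dantzig Selector problem with data (Xₙ, yₙ) and parameter δₙ, the polished estimator β̂ᴾ equals the Oracle estimator β̂ᴼ, tends to one as n → ∞. -/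
noncomputable section
open Classical MeasureTheory ProbabilityTheory Filter Asymptotics

/-- The polished estimator associated with `b`: least squares on the support of `b`. -/
def polished {n p : ℕ} (X : Matrix (Fin n) (Fin p) ℝ) (y : Fin n → ℝ)
    (b : Fin p → ℝ) : Fin p → ℝ :=
  restrictedLS (Finset.univ.filter fun j => b j ≠ 0) X y

open scoped Matrix

/-! On the event `‖Xₙᵀε‖∞ ≤ δₙ` the true vector `β*ₙ = √n β̃*` is feasible, so every Discrete
Dantzig Selector solution `β̂` has at most `|J*|` nonzero entries. As both are feasible,
`‖XₙᵀXₙ (β*ₙ - β̂)‖∞ ≤ 2δₙ`, and because `(XₙᵀXₙ)⁻¹ → C⁻¹` stays bounded this gives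
`‖β*ₙ - β̂‖∞ = O(δₙ) = o(√n)`, while the nonzero entries of `β*ₙ` grow like `√n`. Hence `β̂`
cannot vanish on `J*`, its support is exactly `J*`, and polishing returns the oracle.
The event has probability tending to one by Chebyshev: `(Xₙᵀε)_j` has variance
`(XₙᵀXₙ)_{jj} σ² → C_{jj} σ²`, while `δₙ → ∞`. -/

lemma abs_le_of_abs_mulVec_le {ι : Type*} [Fintype ι] [DecidableEq ι] {A : Matrix ι ι ℝ}
    (hA : IsUnit A.det) {K c : ℝ} (hK : ∀ j k, |A⁻¹ j k| ≤ K) {v : ι → ℝ}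
    (hv : ∀ k, |(A *ᵥ v) k| ≤ c) (j : ι) : |v j| ≤ Fintype.card ι * K * c := by
  have hv_eq : v = A⁻¹ *ᵥ (A *ᵥ v) := by
    rw [Matrix.mulVec_mulVec, Matrix.nonsing_inv_mul A hA, Matrix.one_mulVec]
  calc |v j| = |∑ k, A⁻¹ j k * (A *ᵥ v) k| := by
        conv_lhs => rw [hv_eq]
        rfl
    _ ≤ ∑ k, |A⁻¹ j k| * |(A *ᵥ v) k| :=
        (Finset.abs_sum_le_sum_abs _ _).trans_eq (by simp only [abs_mul])
    _ ≤ ∑ _k : ι, K * c :=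
        Finset.sum_le_sum fun k _ =>
          mul_le_mul (hK j k) (hv k) (abs_nonneg _) ((abs_nonneg _).trans (hK j k))
    _ = Fintype.card ι * K * c := by simp [mul_assoc]

section Deterministic

variable {n p : ℕ} {X : Matrix (Fin n) (Fin p) ℝ} {y : Fin n → ℝ} {δ : ℝ}

lemma feas_mulVec_add_iff (β : Fin p → ℝ) (e : Fin n → ℝ) :
    Feas X (X *ᵥ β + e) δ β ↔ ∀ j, |(Xᵀ *ᵥ e) j| ≤ δ := by
  simp [Feas]

lemma abs_gram_mulVec_sub_le {β β' : Fin p → ℝ} (hβ : Feas X y δ β) (hβ' : Feas X y δ β')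
    (k : Fin p) : |((Xᵀ * X) *ᵥ (β - β')) k| ≤ 2 * δ := by
  have hdiff : (Xᵀ * X) *ᵥ (β - β') = Xᵀ *ᵥ (y - X *ᵥ β') - Xᵀ *ᵥ (y - X *ᵥ β) := by
    simp only [← Matrix.mulVec_mulVec, Matrix.mulVec_sub]
    abel
  calc |((Xᵀ * X) *ᵥ (β - β')) k|
      ≤ |(Xᵀ *ᵥ (y - X *ᵥ β')) k| + |(Xᵀ *ᵥ (y - X *ᵥ β)) k| := by
        rw [hdiff, Pi.sub_apply]; exact abs_sub _ _
    _ ≤ 2 * δ := by linarith [hβ k, hβ' k]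

theorem support_eq_of_isDDSSol {K : ℝ} (hA : IsUnit (Xᵀ * X).det)
    (hK : ∀ j k, |(Xᵀ * X)⁻¹ j k| ≤ K) {β βhat : Fin p → ℝ} {e : Fin n → ℝ}
    (hsep : ∀ j, β j ≠ 0 → 2 * p * K * δ < |β j|) (he : ∀ j, |(Xᵀ *ᵥ e) j| ≤ δ)
    (hsol : IsDDSSol X (X *ᵥ β + e) δ βhat) :
    (Finset.univ.filter fun j => βhat j ≠ 0) = Finset.univ.filter fun j => β j ≠ 0 := by
  have hβ : Feas X (X *ᵥ β + e) δ β := (feas_mulVec_add_iff β e).2 he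
  have hcard : l0 βhat ≤ l0 β := hsol.2 β hβ
  have hdiff : ∀ j, |(β - βhat) j| ≤ p * K * (2 * δ) := by
    simpa using abs_le_of_abs_mulVec_le hA hK (abs_gram_mulVec_sub_le hβ hsol.1)
  refine (Finset.eq_of_subset_of_card_le (fun j hj => ?_) hcard).symm
  simp only [Finset.mem_filter, Finset.mem_univ, true_and] at hj ⊢
  intro hβhat
  have hβj := hdiff j
  rw [Pi.sub_apply, hβhat, sub_zero] at hβj
  linarith [hsep j hj]

end Deterministic

section Noise

variable {Ω : Type*} [MeasurableSpace Ω] {P : Measure Ω}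

lemma measure_lt_abs_weighted_sum_le [IsFiniteMeasure P] {ι : Type*} {ε : ι → Ω → ℝ}
    (hindep : iIndepFun ε P) (hL2 : ∀ i, MemLp (ε i) 2 P) (hmean : ∀ i, ∫ ω, ε i ω ∂P = 0)
    (s : Finset ι) (a : ι → ℝ) {c : ℝ} (hc : 0 < c) :
    P {ω | c < |∑ i ∈ s, a i * ε i ω|} ≤
      ENNReal.ofReal ((∑ i ∈ s, a i ^ 2 * variance (ε i) P) / c ^ 2) := by
  set S : Ω → ℝ := ∑ i ∈ s, fun ω => a i * ε i ω
  have hS : ∀ ω, S ω = ∑ i ∈ s, a i * ε i ω := fun ω => Finset.sum_apply ω s _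
  have hL2_term : ∀ i, MemLp (fun ω => a i * ε i ω) 2 P := fun i => (hL2 i).const_mul (a i)
  have hmeanS : ∫ ω, S ω ∂P = 0 := by
    simp only [hS]
    rw [integral_finsetSum s fun i _ => ((hL2 i).integrable one_le_two).const_mul (a i)]
    simp [integral_const_mul, hmean]
  have hvarS : variance S P = ∑ i ∈ s, a i ^ 2 * variance (ε i) P := by
    rw [IndepFun.variance_sum (fun i _ => hL2_term i)]
    · simp only [variance_const_mul]
    · intro i _ j _ hij
      exact (hindep.indepFun hij).comp (measurable_const_mul (a i)) (measurable_const_mul (a j))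
  calc P {ω | c < |∑ i ∈ s, a i * ε i ω|} ≤ P {ω | c ≤ |S ω - ∫ ω, S ω ∂P|} :=
        measure_mono fun ω (hω : c < _) => show c ≤ _ by
          rw [hmeanS, sub_zero, hS]
          exact hω.le
    _ ≤ _ := hvarS ▸ meas_ge_le_variance_div_sq (memLp_finsetSum' s fun i _ => hL2_term i) hc

variable [IsProbabilityMeasure P] {ε : ℕ → Ω → ℝ}

lemma measure_exists_lt_abs_transpose_mulVec_le (hindep : iIndepFun ε P)
    (hid : ∀ i, IdentDistrib (ε i) (ε 0) P P) (hmean : ∫ ω, ε 0 ω ∂P = 0)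
    (hL2 : MemLp (ε 0) 2 P) {n p : ℕ} (X : Matrix (Fin n) (Fin p) ℝ) {c : ℝ} (hc : 0 < c) :
    P {ω | ∃ j, c < |(Xᵀ *ᵥ fun i => ε i ω) j|} ≤
      ∑ j, ENNReal.ofReal ((Xᵀ * X) j j * variance (ε 0) P / c ^ 2) := by
  have hbound : ∀ j, P {ω | c < |(Xᵀ *ᵥ fun i => ε i ω) j|} ≤
      ENNReal.ofReal ((Xᵀ * X) j j * variance (ε 0) P / c ^ 2) := by
    intro j
    have hcheb := measure_lt_abs_weighted_sum_le (ε := fun i : Fin n => ε i)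
      (hindep.precomp Fin.val_injective) (fun i => (hid i).memLp_iff.2 hL2)
      (fun i => (hid i).integral_eq.trans hmean) Finset.univ (fun i => X i j) hc
    simp only [(hid _).variance_eq, ← Finset.sum_mul] at hcheb
    convert hcheb using 4 with ω
    · simp [Matrix.mulVec, dotProduct, mul_comm]
    · simp [Matrix.mul_apply, sq]
  calc P {ω | ∃ j, c < |(Xᵀ *ᵥ fun i => ε i ω) j|}
      = P (⋃ j, {ω | c < |(Xᵀ *ᵥ fun i => ε i ω) j|}) := by rw [Set.ofPred_exists]
    _ ≤ ∑ j, P {ω | c < |(Xᵀ *ᵥ fun i => ε i ω) j|} := measure_iUnion_fintype_le P _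
    _ ≤ _ := Finset.sum_le_sum fun j _ => hbound j

lemma tendsto_measure_forall_abs_transpose_mulVec_le (hindep : iIndepFun ε P)
    (hid : ∀ i, IdentDistrib (ε i) (ε 0) P P) (hmean : ∫ ω, ε 0 ω ∂P = 0)
    (hL2 : MemLp (ε 0) 2 P) {p : ℕ} {X : (n : ℕ) → Matrix (Fin n) (Fin p) ℝ}
    {C : Matrix (Fin p) (Fin p) ℝ} (hXC : Tendsto (fun n => (X n)ᵀ * X n) atTop (nhds C))
    {δ : ℕ → ℝ} (hδ : Tendsto δ atTop atTop) :
    Tendsto (fun n => P {ω | ∀ j, |((X n)ᵀ *ᵥ fun i => ε i ω) j| ≤ δ n}) atTop (nhds 1) := by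
  set bad : ℕ → Set Ω := fun n => {ω | ∃ j, δ n < |((X n)ᵀ *ᵥ fun i => ε i ω) j|}
  have hbound : Tendsto (fun n => ∑ j, ENNReal.ofReal (((X n)ᵀ * X n) j j * variance (ε 0) P /
      δ n ^ 2)) atTop (nhds 0) := by
    have hterm : ∀ j, Tendsto (fun n => ((X n)ᵀ * X n) j j * variance (ε 0) P / δ n ^ 2)
        atTop (nhds 0) := fun j =>
      (((continuous_apply_apply j j).tendsto C).comp hXC).mul_const _ |>.div_atTop
        ((tendsto_pow_atTop two_ne_zero).comp hδ)
    simpa using tendsto_finsetSum Finset.univ fun j _ => ENNReal.tendsto_ofReal (hterm j)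
  have hbad : Tendsto (fun n => P (bad n)) atTop (nhds 0) :=
    tendsto_of_tendsto_of_tendsto_of_le_of_le' tendsto_const_nhds hbound
      (Eventually.of_forall fun _ => zero_le)
      ((hδ.eventually_gt_atTop 0).mono fun n hn =>
        measure_exists_lt_abs_transpose_mulVec_le hindep hid hmean hL2 (X n) hn)
  have hgood : ∀ n, 1 - P (bad n) ≤ P {ω | ∀ j, |((X n)ᵀ *ᵥ fun i => ε i ω) j| ≤ δ n} := by
    intro n
    have hcompl : {ω | ∀ j, |((X n)ᵀ *ᵥ fun i => ε i ω) j| ≤ δ n} = (bad n)ᶜ := by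
      ext ω; simp [bad]
    rw [hcompl, tsub_le_iff_left, ← measure_univ (μ := P)]
    exact measure_univ_le_add_compl _
  refine tendsto_of_tendsto_of_tendsto_of_le_of_le' ?_ tendsto_const_nhds
    (Eventually.of_forall hgood) (Eventually.of_forall fun _ => prob_le_one)
  simpa using ENNReal.Tendsto.sub tendsto_const_nhds hbad (Or.inl ENNReal.one_ne_top)

end Noise

section Asymptotics

variable {α : Type*} {l : Filter α} {ι : Type*} [Fintype ι] {A : α → Matrix ι ι ℝ}
  {C : Matrix ι ι ℝ}

attribute [local instance] Matrix.normedAddCommGroup in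
lemma exists_eventually_abs_apply_le (hA : Tendsto A l (nhds C)) :
    ∃ K, ∀ᶠ a in l, ∀ j k, |A a j k| ≤ K :=
  ⟨‖C‖ + 1, (hA.norm.eventually (gt_mem_nhds (lt_add_one _))).mono fun _ h _ _ =>
    (Matrix.norm_entry_le_entrywise_sup_norm _).trans h.le⟩

variable [DecidableEq ι]

lemma eventually_isUnit_det_of_tendsto (hA : Tendsto A l (nhds C)) (hC : IsUnit C.det) :
    ∀ᶠ a in l, IsUnit (A a).det :=
  ((continuous_id.matrix_det.tendsto C).comp hA).eventually (Units.isOpen.mem_nhds hC)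

lemma tendsto_inv_of_tendsto (hA : Tendsto A l (nhds C)) (hC : IsUnit C.det) :
    Tendsto (fun a => (A a)⁻¹) l (nhds C⁻¹) := by
  refine (continuousAt_matrix_inv C ?_).tendsto.comp hA
  rw [Ring.inverse_eq_inv']
  exact continuousAt_inv₀ hC.ne_zero

end Asymptotics

lemma eventually_mul_lt_sqrt_mul {δ : ℕ → ℝ} (hδ : δ =o[atTop] fun n : ℕ => Real.sqrt n)
    (M : ℝ) {b : ℝ} (hb : 0 < b) : ∀ᶠ n : ℕ in atTop, M * δ n < Real.sqrt n * b := by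
  have hlim : Tendsto (fun n => M * δ n / Real.sqrt n) atTop (nhds 0) := by
    simpa [mul_div_assoc] using hδ.tendsto_div_nhds_zero.const_mul M
  filter_upwards [hlim.eventually (gt_mem_nhds hb), eventually_gt_atTop 0] with n hn hn0
  have hsqrt : 0 < Real.sqrt n := Real.sqrt_pos.2 (Nat.cast_pos.2 hn0)
  rw [div_lt_iff₀ hsqrt] at hn
  linarith

theorem stmt12_general {Ω : Type*} [MeasurableSpace Ω] (P : Measure Ω) [IsProbabilityMeasure P]
    {p : ℕ} (βt : Fin p → ℝ)
    (X : (n : ℕ) → Matrix (Fin n) (Fin p) ℝ)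
    (ε : ℕ → Ω → ℝ) (hmeas : ∀ i, Measurable (ε i))
    (hindep : iIndepFun ε P)
    (hident : ∀ i, Measure.map (ε i) P = Measure.map (ε 0) P)
    (hmean : ∫ ω, ε 0 ω ∂P = 0)
    (hvar : MemLp (ε 0) 2 P)
    (C : Matrix (Fin p) (Fin p) ℝ) (hC : IsUnit C.det)
    (hXC : Tendsto (fun n => (X n).transpose * (X n)) atTop (nhds C))
    (δ : ℕ → ℝ) (hδ_inf : Tendsto δ atTop atTop)
    (hδ_o : δ =o[atTop] fun n : ℕ => Real.sqrt n) :
    Tendsto (fun n => P {ω | ∀ βhat : Fin p → ℝ,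
        IsDDSSol (X n) (fun i => (X n).mulVec (fun j => Real.sqrt n * βt j) i + ε i ω)
          (δ n) βhat →
        polished (X n) (fun i => (X n).mulVec (fun j => Real.sqrt n * βt j) i + ε i ω)
            βhat =
          restrictedLS (Finset.univ.filter fun j => βt j ≠ 0) (X n)
            (fun i => (X n).mulVec (fun j => Real.sqrt n * βt j) i + ε i ω)})
      atTop (nhds 1) := by
  have hid : ∀ i, IdentDistrib (ε i) (ε 0) P P := fun i =>
    ⟨(hmeas i).aemeasurable, (hmeas 0).aemeasurable, hident i⟩
  obtain ⟨K, hK⟩ := exists_eventually_abs_apply_le (tendsto_inv_of_tendsto hXC hC)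
  have hsep : ∀ᶠ n : ℕ in atTop, ∀ j, Real.sqrt n * βt j ≠ 0 →
      2 * p * K * δ n < |Real.sqrt n * βt j| := by
    refine eventually_all.2 fun j => ?_
    by_cases hj : βt j = 0
    · exact Eventually.of_forall fun _ h => absurd (by simp [hj]) h
    filter_upwards [eventually_mul_lt_sqrt_mul hδ_o (2 * p * K) (abs_pos.2 hj)] with n hn _
    rwa [abs_mul, abs_of_nonneg (Real.sqrt_nonneg _)]
  have hsupp : ∀ᶠ n : ℕ in atTop, (Finset.univ.filter fun j => Real.sqrt n * βt j ≠ 0) =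
      Finset.univ.filter fun j => βt j ≠ 0 := by
    filter_upwards [eventually_gt_atTop 0] with n hn
    simp [(Real.sqrt_pos.2 (Nat.cast_pos.2 hn)).ne']
  refine tendsto_of_tendsto_of_tendsto_of_le_of_le'
    (tendsto_measure_forall_abs_transpose_mulVec_le hindep hid hmean hvar hXC hδ_inf)
    tendsto_const_nhds ?_ (Eventually.of_forall fun _ => prob_le_one)
  filter_upwards [eventually_isUnit_det_of_tendsto hXC hC, hK, hsep, hsupp]
    with n hA hKn hsepn hsuppn
  refine measure_mono fun ω he βhat hsol => ?_
  rw [polished, support_eq_of_isDDSSol (β := fun j => Real.sqrt n * βt j) (e := fun i => ε i ω)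
    hA hKn hsepn he hsol, hsuppn]

/-- Fixed-`p` asymptotics: with probability tending to one, for every
Discrete Dantzig Selector solution `β̂`, the polished estimator `β̂ᴾ` coincides with the
Oracle estimator `β̂ᴼ` (least squares on `J* = supp β̃*`). -/
theorem stmt12 {Ω : Type*} [MeasurableSpace Ω] (P : Measure Ω) [IsProbabilityMeasure P]
    {p : ℕ} (βt : Fin p → ℝ)
    (X : (n : ℕ) → Matrix (Fin n) (Fin p) ℝ)
    (ε : ℕ → Ω → ℝ) (hmeas : ∀ i, Measurable (ε i))
    (hindep : iIndepFun ε P)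
    (hident : ∀ i, Measure.map (ε i) P = Measure.map (ε 0) P)
    (hint : Integrable (ε 0) P) (hmean : ∫ ω, ε 0 ω ∂P = 0)
    (hvar : MemLp (ε 0) 2 P)
    (C : Matrix (Fin p) (Fin p) ℝ) (hC : IsUnit C.det)
    (hXC : Tendsto (fun n => (X n).transpose * (X n)) atTop (nhds C))
    (δ : ℕ → ℝ) (hδ_inf : Tendsto δ atTop atTop)
    (hδ_o : δ =o[atTop] fun n : ℕ => Real.sqrt n) :
    Tendsto (fun n => P {ω | ∀ βhat : Fin p → ℝ,
        IsDDSSol (X n) (fun i => (X n).mulVec (fun j => Real.sqrt n * βt j) i + ε i ω)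
          (δ n) βhat →
        polished (X n) (fun i => (X n).mulVec (fun j => Real.sqrt n * βt j) i + ε i ω)
            βhat =
          restrictedLS (Finset.univ.filter fun j => βt j ≠ 0) (X n)
            (fun i => (X n).mulVec (fun j => Real.sqrt n * βt j) i + ε i ω)})
      atTop (nhds 1) :=
  stmt12_general P βt X ε hmeas hindep hident hmean hvar C hC hXC δ hδ_inf hδ_o
end
end

section
/- (Finite-time convergence rate of sequential linear optimization.) Fix γ > 0 and a function ρ_γ satisfying Assumption (A), and let X ∈ ℝ^{n×p}, y ∈ ℝⁿ, δ ≥ 0 with nonempty feasible set F = { β ∈ ℝ^p : ‖Xᵀ(y − Xβ)‖∞ ≤ δ }. Define h(β) = Σᵢ ρ_γ(|βᵢ|), let β¹ ∈ F, and for k ≥ 1 let β^{k+1} be any minimizer over β ∈ F of Σᵢ ρ'_γ(|β^k_i|)·|βᵢ|. Let ĥ be the limit of the nonincreasing sequence h(β^k). Then for every positive integer K: min_{1 ≤ k ≤ K} ( −Δ(β^k) ) ≤ ( h(β¹) − ĥ ) / K, where Δ(θ) = min over β ∈ F of Σᵢ ρ'_γ(|θᵢ|)·(|βᵢ| − |θᵢ|).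 -/
/-!
Concavity of `ρ` on `(0, ∞)` gives the tangent-line bound `ρ s - ρ t ≤ ρ'(t) (s - t)` for
`s, t ≥ 0`, extended to the endpoints by continuity of `ρ` and of `ρ'` at `0⁺`. Summed over the
coordinates it bounds `h(β^{k+1}) - h(β^k)` by `Σᵢ ρ'(|β^k_i|)(|β^{k+1}_i| - |β^k_i|)`, which is at
most `Δ(β^k)` because `β^{k+1}` minimizes the weighted `ℓ₁` surrogate. Since `Δ ≤ 0` at feasible points,
`h(β^k)` decreases, and the bounds `-Δ(β^k) ≤ h(β^k) - h(β^{k+1})` telescope to at most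
`h(β¹) - ĥ`, so the smallest of the first `K` is at most `(h(β¹) - ĥ)/K`.
-/

noncomputable section
open Classical
open scoped ENNReal NNReal

/-- The objective `h(β) = Σᵢ ρ(|βᵢ|)`. -/
def hObj {p : ℕ} (ρ : ℝ → ℝ) (β : Fin p → ℝ) : ℝ := ∑ i, ρ |β i|

/-- The weighted ℓ₁-type surrogate objective `Σᵢ ρ'(|θᵢ|)·|βᵢ|`, with extended-real
weights so that the convention `ρ'(0) = ∞` is meaningful (`∞ · 0 = 0`). -/
def surr {p : ℕ} (ρ' : ℝ → ℝ≥0∞) (θ β : Fin p → ℝ) : ℝ≥0∞ :=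
  ∑ i, ρ' |θ i| * ENNReal.ofReal |β i|

/-- `Δ(θ) = min over feasible β of Σᵢ ρ'(|θᵢ|)·(|βᵢ| − |θᵢ|)`, as an extended real. -/
def Delta {n p : ℕ} (X : Matrix (Fin n) (Fin p) ℝ) (y : Fin n → ℝ) (δ : ℝ)
    (ρ' : ℝ → ℝ≥0∞) (θ : Fin p → ℝ) : EReal :=
  sInf {s : EReal | ∃ β : Fin p → ℝ, Feas X y δ β ∧
    s = ∑ i, (ρ' |θ i| : EReal) * ((|β i| - |θ i| : ℝ) : EReal)}

open Filter Topology Finset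

lemma ConcaveOn.sub_le_mul_sub_of_hasDerivAt {S : Set ℝ} {f : ℝ → ℝ} {d s t : ℝ}
    (hf : ConcaveOn ℝ S f) (hs : s ∈ S) (ht : t ∈ S) (hd : HasDerivAt f d t) :
    f s - f t ≤ d * (s - t) := by
  rcases lt_trichotomy s t with hst | rfl | hts
  · have h := hf.le_slope_of_hasDerivAt hs ht hst hd
    rw [slope_def_field, le_div_iff₀ (sub_pos.2 hst)] at h
    linarith
  · simp
  · have h := hf.slope_le_of_hasDerivAt ht hs hts hd
    rw [slope_def_field, div_le_iff₀ (sub_pos.2 hts)] at h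
    linarith

lemma tangent_ineq_of_pos {ρ : ℝ → ℝ} {ρ' : ℝ → ℝ≥0∞} (hcont : Continuous ρ)
    (hconc : ConcaveOn ℝ (Set.Ioi 0) ρ)
    (hderiv : ∀ t : ℝ, 0 < t → ρ' t ≠ ⊤ ∧ HasDerivAt ρ (ρ' t).toReal t)
    {s t : ℝ} (hs : 0 ≤ s) (ht : 0 < t) :
    ρ s - ρ t ≤ (ρ' t).toReal * (s - t) := by
  rcases hs.eq_or_lt with rfl | hs
  · have hlhs : Tendsto (fun u => ρ u - ρ t) (𝓝[>] 0) (𝓝 (ρ 0 - ρ t)) :=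
      ((hcont.tendsto 0).sub tendsto_const_nhds).mono_left nhdsWithin_le_nhds
    have hrhs : Tendsto (fun u => (ρ' t).toReal * (u - t)) (𝓝[>] 0)
        (𝓝 ((ρ' t).toReal * (0 - t))) :=
      (tendsto_const_nhds.mul (tendsto_id.sub tendsto_const_nhds)).mono_left
        nhdsWithin_le_nhds
    refine le_of_tendsto_of_tendsto hlhs hrhs ?_
    filter_upwards [self_mem_nhdsWithin] with u hu
    exact hconc.sub_le_mul_sub_of_hasDerivAt hu ht (hderiv t ht).2
  · exact hconc.sub_le_mul_sub_of_hasDerivAt hs ht (hderiv t ht).2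

lemma tangent_ineq {ρ : ℝ → ℝ} {ρ' : ℝ → ℝ≥0∞} (hcont : Continuous ρ)
    (hconc : ConcaveOn ℝ (Set.Ioi 0) ρ)
    (hderiv : ∀ t : ℝ, 0 < t → ρ' t ≠ ⊤ ∧ HasDerivAt ρ (ρ' t).toReal t)
    (hzeroconv : Tendsto ρ' (𝓝[>] 0) (𝓝 (ρ' 0)))
    {s t : ℝ} (hs : 0 ≤ s) (ht : 0 ≤ t) (htop : ρ' t ≠ ⊤) :
    ρ s - ρ t ≤ (ρ' t).toReal * (s - t) := by
  rcases ht.eq_or_lt with rfl | ht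
  · have hlhs : Tendsto (fun u => ρ s - ρ u) (𝓝[>] 0) (𝓝 (ρ s - ρ 0)) :=
      (tendsto_const_nhds.sub (hcont.tendsto 0)).mono_left nhdsWithin_le_nhds
    have hrhs : Tendsto (fun u => (ρ' u).toReal * (s - u)) (𝓝[>] 0)
        (𝓝 ((ρ' 0).toReal * (s - 0))) :=
      ((ENNReal.tendsto_toReal htop).comp hzeroconv).mul
        ((tendsto_const_nhds.sub tendsto_id).mono_left nhdsWithin_le_nhds)
    refine le_of_tendsto_of_tendsto hlhs hrhs ?_
    filter_upwards [self_mem_nhdsWithin] with u hu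
    exact tangent_ineq_of_pos hcont hconc hderiv hs hu
  · exact tangent_ineq_of_pos hcont hconc hderiv hs ht


lemma tangent_ineq_ereal {ρ : ℝ → ℝ} {ρ' : ℝ → ℝ≥0∞} (hcont : Continuous ρ)
    (hconc : ConcaveOn ℝ (Set.Ioi 0) ρ)
    (hderiv : ∀ t : ℝ, 0 < t → ρ' t ≠ ⊤ ∧ HasDerivAt ρ (ρ' t).toReal t)
    (hzeroconv : Tendsto ρ' (𝓝[>] 0) (𝓝 (ρ' 0)))
    {s t : ℝ} (hs : 0 ≤ s) (ht : 0 ≤ t) :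
    ((ρ s - ρ t : ℝ) : EReal) ≤ (ρ' t : EReal) * ((s - t : ℝ) : EReal) := by
  by_cases htop : ρ' t = ⊤
  · obtain rfl : t = 0 := by
      by_contra ht0
      exact (hderiv t (ht.lt_of_ne' ht0)).1 htop
    rcases hs.eq_or_lt with rfl | hs
    · simp
    · rw [htop, EReal.coe_ennreal_top, EReal.top_mul_of_pos (by simpa using hs)]
      exact le_top
  · rw [← EReal.coe_ennreal_toReal htop, ← EReal.coe_mul, EReal.coe_le_coe_iff]
    exact tangent_ineq hcont hconc hderiv hzeroconv hs ht htop

lemma EReal.coe_ennreal_finsetSum {ι : Type*} (s : Finset ι) (f : ι → ℝ≥0∞) :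
    ((∑ i ∈ s, f i : ℝ≥0∞) : EReal) = ∑ i ∈ s, (f i : EReal) :=
  map_sum (⟨⟨(↑), EReal.coe_ennreal_zero⟩, EReal.coe_ennreal_add⟩ : ℝ≥0∞ →+ EReal) f s

lemma EReal.coe_finsetSum {ι : Type*} (s : Finset ι) (f : ι → ℝ) :
    ((∑ i ∈ s, f i : ℝ) : EReal) = ∑ i ∈ s, (f i : EReal) :=
  map_sum (⟨⟨(↑), EReal.coe_zero⟩, EReal.coe_add⟩ : ℝ →+ EReal) f s

lemma EReal.coe_ennreal_mul_coe_sub {w : ℝ≥0∞} {a c : ℝ} (ha : 0 ≤ a)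
    (hc : w = ⊤ → c = 0) :
    (w : EReal) * ((a - c : ℝ) : EReal) =
      ((w * ENNReal.ofReal a : ℝ≥0∞) : EReal) + ((-(w.toReal * c) : ℝ) : EReal) := by
  by_cases hw : w = ⊤
  · obtain rfl := hc hw
    subst hw
    rcases ha.eq_or_lt with rfl | ha
    · simp
    · rw [sub_zero, EReal.coe_ennreal_top, EReal.top_mul_of_pos (by simpa using ha),
        ENNReal.top_mul (by simpa using ha)]
      simp
  · rw [← EReal.coe_ennreal_toReal hw,
      ← EReal.coe_ennreal_toReal (ENNReal.mul_ne_top hw ENNReal.ofReal_ne_top),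
      ENNReal.toReal_mul, ENNReal.toReal_ofReal ha, ← EReal.coe_mul, ← EReal.coe_add]
    ring_nf

lemma sum_mul_sub_eq_surr_add {p : ℕ} {ρ' : ℝ → ℝ≥0∞} (θ β : Fin p → ℝ)
    (htop : ∀ i, ρ' |θ i| = ⊤ → θ i = 0) :
    ∑ i, (ρ' |θ i| : EReal) * ((|β i| - |θ i| : ℝ) : EReal) =
      (surr ρ' θ β : EReal) + ((-∑ i, (ρ' |θ i|).toReal * |θ i| : ℝ) : EReal) := by
  rw [surr, EReal.coe_ennreal_finsetSum, ← Finset.sum_neg_distrib, EReal.coe_finsetSum,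
    ← Finset.sum_add_distrib]
  refine Finset.sum_congr rfl fun i _ => EReal.coe_ennreal_mul_coe_sub (abs_nonneg _) ?_
  simpa using htop i


lemma Delta_nonpos {n p : ℕ} {X : Matrix (Fin n) (Fin p) ℝ} {y : Fin n → ℝ} {δ : ℝ}
    (ρ' : ℝ → ℝ≥0∞) {θ : Fin p → ℝ} (hθ : Feas X y δ θ) :
    Delta X y δ ρ' θ ≤ 0 :=
  sInf_le ⟨θ, hθ, by simp⟩

lemma neg_Delta_le_hObj_sub {n p : ℕ} {X : Matrix (Fin n) (Fin p) ℝ} {y : Fin n → ℝ} {δ : ℝ}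
    {ρ : ℝ → ℝ} {ρ' : ℝ → ℝ≥0∞} (hcont : Continuous ρ) (hconc : ConcaveOn ℝ (Set.Ioi 0) ρ)
    (hderiv : ∀ t : ℝ, 0 < t → ρ' t ≠ ⊤ ∧ HasDerivAt ρ (ρ' t).toReal t)
    (hzeroconv : Tendsto ρ' (𝓝[>] 0) (𝓝 (ρ' 0)))
    {θ b : Fin p → ℝ} (hb : ∀ β, Feas X y δ β → surr ρ' θ b ≤ surr ρ' θ β) :
    -Delta X y δ ρ' θ ≤ ((hObj ρ θ - hObj ρ b : ℝ) : EReal) := by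
  have htop : ∀ i, ρ' |θ i| = ⊤ → θ i = 0 := fun i hi => by
    by_contra h
    exact (hderiv _ (abs_pos.2 h)).1 hi
  rw [EReal.neg_le, ← EReal.coe_neg, neg_sub]
  refine le_sInf ?_
  rintro _ ⟨β, hβ, rfl⟩
  calc ((hObj ρ b - hObj ρ θ : ℝ) : EReal)
      = ∑ i, ((ρ |b i| - ρ |θ i| : ℝ) : EReal) := by
        rw [hObj, hObj, ← Finset.sum_sub_distrib, EReal.coe_finsetSum]
    _ ≤ ∑ i, (ρ' |θ i| : EReal) * ((|b i| - |θ i| : ℝ) : EReal) :=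
        Finset.sum_le_sum fun i _ =>
          tangent_ineq_ereal hcont hconc hderiv hzeroconv (abs_nonneg _) (abs_nonneg _)
    _ ≤ ∑ i, (ρ' |θ i| : EReal) * ((|β i| - |θ i| : ℝ) : EReal) := by
        rw [sum_mul_sub_eq_surr_add θ b htop, sum_mul_sub_eq_surr_add θ β htop]
        gcongr
        exact EReal.coe_ennreal_le_coe_ennreal_iff.2 (hb β hβ)

lemma Antitone.exists_sub_succ_le_div {g : ℕ → ℝ} {L : ℝ} (hg : Antitone g)
    (hL : Tendsto g atTop (𝓝 L)) {K : ℕ} (hK : 0 < K) :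
    ∃ k < K, g k - g (k + 1) ≤ (g 0 - L) / K := by
  have hsum : ∑ k ∈ range K, (g k - g (k + 1)) ≤ ∑ _k ∈ range K, (g 0 - L) / K := by
    rw [Finset.sum_range_sub', Finset.sum_const, card_range, nsmul_eq_mul,
      mul_div_cancel₀ _ (by positivity)]
    linarith [hg.le_of_tendsto hL K]
  simpa using Finset.exists_le_of_sum_le (nonempty_range_iff.2 hK.ne') hsum


theorem stmt14_general {n p : ℕ} (X : Matrix (Fin n) (Fin p) ℝ) (y : Fin n → ℝ)
    (δ : ℝ)
    (ρ : ℝ → ℝ) (ρ' : ℝ → ℝ≥0∞)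
    (hcont : Continuous ρ)
    (hconc : ConcaveOn ℝ (Set.Ioi (0 : ℝ)) ρ)
    (hderiv : ∀ t : ℝ, 0 < t → ρ' t ≠ ⊤ ∧ HasDerivAt ρ (ρ' t).toReal t)
    (hzeroconv : Filter.Tendsto ρ' (nhdsWithin 0 (Set.Ioi 0)) (nhds (ρ' 0)))
    (B : ℕ → Fin p → ℝ)
    (hB1 : Feas X y δ (B 1))
    (hstep : ∀ k : ℕ, 1 ≤ k →
      Feas X y δ (B (k + 1)) ∧
      ∀ β : Fin p → ℝ, Feas X y δ β → surr ρ' (B k) (B (k + 1)) ≤ surr ρ' (B k) β)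
    (hhat : ℝ)
    (hlim : Filter.Tendsto (fun k => hObj ρ (B k)) Filter.atTop (nhds hhat)) :
    ∀ K : ℕ, (hK : 1 ≤ K) →
      (Finset.Icc 1 K).inf' (Finset.nonempty_Icc.mpr hK)
          (fun k => -(Delta X y δ ρ' (B k))) ≤
        (((hObj ρ (B 1) - hhat) / (K : ℝ) : ℝ) : EReal) := by
  intro K hK
  have hfeas : ∀ k, 1 ≤ k → Feas X y δ (B k) := fun k hk => by
    induction k, hk using Nat.le_induction with
    | base => exact hB1
    | succ k hk _ => exact (hstep k hk).1
  have hdecrease : ∀ k, 1 ≤ k →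
      -Delta X y δ ρ' (B k) ≤ ((hObj ρ (B k) - hObj ρ (B (k + 1)) : ℝ) : EReal) :=
    fun k hk => neg_Delta_le_hObj_sub hcont hconc hderiv hzeroconv (hstep k hk).2
  have hanti : Antitone fun k => hObj ρ (B (k + 1)) := antitone_nat_of_succ_le fun k => by
    have h := (EReal.neg_nonneg.2 (Delta_nonpos ρ' (hfeas (k + 1) (by omega)))).trans
      (hdecrease (k + 1) (by omega))
    rw [← EReal.coe_zero, EReal.coe_le_coe_iff] at h
    linarith
  obtain ⟨k, hkK, hk⟩ :=
    hanti.exists_sub_succ_le_div ((tendsto_add_atTop_iff_nat 1).2 hlim) hK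
  calc _ ≤ -Delta X y δ ρ' (B (k + 1)) :=
        inf'_le (fun k => -Delta X y δ ρ' (B k)) (Finset.mem_Icc.2 ⟨by omega, by omega⟩)
    _ ≤ _ := hdecrease (k + 1) (by omega)
    _ ≤ _ := EReal.coe_le_coe_iff.2 hk

/-- Finite-time convergence rate of the sequential linear optimization
scheme: if `ĥ` is the limit of the nonincreasing sequence `h(β^k)`, then for every `K ≥ 1`,
`min_{1 ≤ k ≤ K} (−Δ(β^k)) ≤ (h(β¹) − ĥ)/K`. -/
theorem stmt14 {n p : ℕ} (X : Matrix (Fin n) (Fin p) ℝ) (y : Fin n → ℝ)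
    (δ : ℝ) (hδ : 0 ≤ δ)
    (ρ : ℝ → ℝ) (ρ' : ℝ → ℝ≥0∞)
    (hsym : ∀ t : ℝ, ρ (-t) = ρ t)
    (hcont : Continuous ρ)
    (hnonneg : ∀ t : ℝ, 0 ≤ ρ t)
    (hzero : ρ 0 = 0)
    (hconc : ConcaveOn ℝ (Set.Ioi (0 : ℝ)) ρ)
    (hderiv : ∀ t : ℝ, 0 < t → ρ' t ≠ ⊤ ∧ HasDerivAt ρ (ρ' t).toReal t)
    (hzeroconv : Filter.Tendsto ρ' (nhdsWithin 0 (Set.Ioi 0)) (nhds (ρ' 0)))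
    (B : ℕ → Fin p → ℝ)
    (hB1 : Feas X y δ (B 1))
    (hstep : ∀ k : ℕ, 1 ≤ k →
      Feas X y δ (B (k + 1)) ∧
      ∀ β : Fin p → ℝ, Feas X y δ β → surr ρ' (B k) (B (k + 1)) ≤ surr ρ' (B k) β)
    (hhat : ℝ)
    (hlim : Filter.Tendsto (fun k => hObj ρ (B k)) Filter.atTop (nhds hhat)) :
    ∀ K : ℕ, (hK : 1 ≤ K) →
      (Finset.Icc 1 K).inf' (Finset.nonempty_Icc.mpr hK)
          (fun k => -(Delta X y δ ρ' (B k))) ≤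
        (((hObj ρ (B 1) - hhat) / (K : ℝ) : ℝ) : EReal) :=
  stmt14_general X y δ ρ ρ' hcont hconc hderiv hzeroconv B hB1 hstep hhat hlim
end
end

section
/- (Example 1: ℓ₁ minimization selects the dense representation.) Let n ≥ 2, p = n + 1, and τ > 0. Let X ∈ ℝ^{n×p} have first column x₁ = (1, τ, …, τ)ᵀ and, for j = 2,…,p, j-th column x_j = e_{j−1}, the (j−1)-st standard basis vector of ℝⁿ. Let y = x₁ − x₂, and let β_dense ∈ ℝ^p be the coefficient vector with β_j = τ for j = 3,…,p and β₁ = β₂ = 0 (so X β_dense = y). If τ(n−1) < 2, then β_dense is the unique minimizer of ‖β‖₁ over { β ∈ ℝ^p : Xβ = y }; in particular the sparse coefficient vector e₁ − e₂ ∈ ℝ^p, which also satisfies X(e₁ − e₂) = y and has ‖e₁ − e₂‖₁ = 2 > τ(n−1), is not an ℓ₁ minimizer. -/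
noncomputable section
open Classical

/-- ℓ₁-norm. -/
def l1 {p : ℕ} (β : Fin p → ℝ) : ℝ := ∑ i, |β i|

/-!
The constraint `Xβ = y` cuts out the line `β(t) = (t, -t, τ(1-t), …, τ(1-t))`, parametrised by
the first coordinate, and along it `‖β(t)‖₁ = 2|t| + τ(n-1)|1-t|`. When `τ(n-1) < 2` the slope
of the first term dominates, so this is uniquely minimised at `t = 0`, the dense representation;
the sparse one is `t = 1`.
-/

theorem lt_mul_abs_add_mul_abs_one_sub {a b t : ℝ} (hb : 0 ≤ b) (hba : b < a) (ht : t ≠ 0) :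
    b < a * |t| + b * |1 - t| := by
  have h : 1 - |t| ≤ |1 - t| := by
    simpa using abs_sub_abs_le_abs_sub (1 : ℝ) t
  nlinarith [mul_le_mul_of_nonneg_left h hb, mul_pos (sub_pos.2 hba) (abs_pos.2 ht)]

namespace DenseExample

def designMatrix (n : ℕ) (τ : ℝ) : Matrix (Fin n) (Fin (n + 1)) ℝ :=
  Matrix.of fun i j =>
    if (j : ℕ) = 0 then (if (i : ℕ) = 0 then 1 else τ)
    else (if (i : ℕ) = (j : ℕ) - 1 then 1 else 0)

def response (n : ℕ) (τ : ℝ) : Fin n → ℝ := fun i => if (i : ℕ) = 0 then 0 else τ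

def solutionLine (n : ℕ) (τ t : ℝ) : Fin (n + 1) → ℝ := fun j =>
  if (j : ℕ) = 0 then t else if (j : ℕ) = 1 then -t else τ * (1 - t)

variable {n : ℕ} {τ : ℝ}

theorem designMatrix_mulVec_apply (β : Fin (n + 1) → ℝ) (i : Fin n) :
    (designMatrix n τ).mulVec β i = (if (i : ℕ) = 0 then 1 else τ) * β 0 + β i.succ := by
  rw [Matrix.mulVec, dotProduct, Fin.sum_univ_succ, Finset.sum_eq_single i]
  · simp [designMatrix]
  · intro k _ hk
    have : (i : ℕ) ≠ k := fun h => hk (Fin.ext h.symm)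
    simp [designMatrix, this]
  · simp

theorem designMatrix_mulVec_solutionLine (t : ℝ) :
    (designMatrix n τ).mulVec (solutionLine n τ t) = response n τ := by
  funext i
  rw [designMatrix_mulVec_apply]
  by_cases hi : (i : ℕ) = 0
  · simp [solutionLine, response, hi]
  · simp only [solutionLine, response, hi, ↓reduceIte, Fin.coe_ofNat_eq_mod, Nat.zero_mod,
      Fin.val_succ, Nat.add_eq_zero_iff, one_ne_zero, and_self, Nat.add_eq_right]
    ring

theorem eq_solutionLine_of_mulVec_eq {β : Fin (n + 1) → ℝ}
    (hβ : (designMatrix n τ).mulVec β = response n τ) : β = solutionLine n τ (β 0) := by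
  funext j
  cases j using Fin.cases with
  | zero => simp [solutionLine]
  | succ i =>
    have hrow := congrFun hβ i
    rw [designMatrix_mulVec_apply] at hrow
    by_cases hi : (i : ℕ) = 0
    · simp only [response, solutionLine, hi, ↓reduceIte, one_mul, Fin.val_succ, zero_add,
        one_ne_zero] at hrow ⊢
      linarith
    · simp only [response, solutionLine, hi, ↓reduceIte, Fin.val_succ, Nat.add_eq_zero_iff,
        one_ne_zero, and_self, Nat.add_eq_right] at hrow ⊢
      linarith

theorem l1_solutionLine (hn : 1 ≤ n) (hτ : 0 ≤ τ) (t : ℝ) :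
    l1 (solutionLine n τ t) = 2 * |t| + τ * ((n : ℝ) - 1) * |1 - t| := by
  obtain ⟨m, rfl⟩ : ∃ m, n = m + 1 := ⟨n - 1, by omega⟩
  simp only [l1, solutionLine, Fin.val_eq_zero_iff, Fin.sum_univ_succ, ↓reduceIte,
    Fin.succ_ne_zero, Fin.val_succ, Nat.add_eq_right, abs_neg, abs_mul, abs_of_nonneg hτ,
    Finset.sum_const, Finset.card_univ, Fintype.card_fin, nsmul_eq_mul, Nat.cast_add, Nat.cast_one,
    add_sub_cancel_right]
  ring

end DenseExample

open DenseExample in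
/-- Example 1: with `x₁ = (1,τ,…,τ)ᵀ`, `x_j = e_{j−1}` for `j ≥ 2`,
`y = x₁ − x₂` and `τ(n−1) < 2`, the dense representation `β_dense` (with `β_j = τ` for
`j ≥ 3` and `β₁ = β₂ = 0`) is the unique ℓ₁-minimizer over `{β : Xβ = y}`; in particular
the sparse vector `e₁ − e₂`, which also represents `y` and has ℓ₁-norm `2`, is not an
ℓ₁-minimizer.  (Indices are `0`-based in this formalization.) -/
theorem stmt18 (n : ℕ) (hn : 2 ≤ n) (τ : ℝ) (hτ : 0 < τ)
    (X : Matrix (Fin n) (Fin (n + 1)) ℝ)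
    (hX : ∀ i j, X i j =
      if (j : ℕ) = 0 then (if (i : ℕ) = 0 then 1 else τ)
      else (if (i : ℕ) = (j : ℕ) - 1 then 1 else 0))
    (y : Fin n → ℝ) (hy : ∀ i, y i = X i 0 - X i 1)
    (βdense : Fin (n + 1) → ℝ)
    (hβdense : ∀ j, βdense j = if 2 ≤ (j : ℕ) then τ else 0)
    (βsparse : Fin (n + 1) → ℝ)
    (hβsparse : ∀ j, βsparse j =
      if (j : ℕ) = 0 then 1 else if (j : ℕ) = 1 then -1 else 0)
    (hτn : τ * ((n : ℝ) - 1) < 2) :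
    X.mulVec βdense = y ∧
    (∀ β : Fin (n + 1) → ℝ, X.mulVec β = y → β ≠ βdense → l1 βdense < l1 β) ∧
    X.mulVec βsparse = y ∧
    l1 βsparse = 2 ∧
    ¬ (∀ β : Fin (n + 1) → ℝ, X.mulVec β = y → l1 βsparse ≤ l1 β) := by
  obtain rfl : X = designMatrix n τ := Matrix.ext hX
  obtain rfl : y = response n τ := by
    have hone : 1 % (n + 1) = 1 := Nat.mod_eq_of_lt (by omega)
    funext i
    by_cases hi : (i : ℕ) = 0 <;> simp [hy, designMatrix, response, hi, hone, show n ≠ 0 by omega]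
  obtain rfl : βdense = solutionLine n τ 0 := by
    funext j; rw [hβdense]; unfold solutionLine; split_ifs <;> first | rfl | omega | ring
  obtain rfl : βsparse = solutionLine n τ 1 := by
    funext j; rw [hβsparse]; unfold solutionLine; split_ifs <;> first | rfl | omega | ring
  have hl1 := l1_solutionLine (by omega : 1 ≤ n) hτ.le
  have hl1dense : l1 (solutionLine n τ 0) = τ * ((n : ℝ) - 1) := by simp [hl1]
  have hl1sparse : l1 (solutionLine n τ 1) = 2 := by simp [hl1]
  refine ⟨designMatrix_mulVec_solutionLine 0, fun β hβ hne => ?_,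
    designMatrix_mulVec_solutionLine 1, hl1sparse, fun hmin => ?_⟩
  · have hβ0 : β 0 ≠ 0 := fun h0 => hne (by rw [eq_solutionLine_of_mulVec_eq hβ, h0])
    have hn1 : (1 : ℝ) ≤ n := by exact_mod_cast (by omega : 1 ≤ n)
    rw [hl1dense, eq_solutionLine_of_mulVec_eq hβ, hl1]
    exact lt_mul_abs_add_mul_abs_one_sub (mul_nonneg hτ.le (by linarith)) hτn hβ0
  · have hsparse_le := hmin _ (designMatrix_mulVec_solutionLine 0)
    rw [hl1dense, hl1sparse] at hsparse_le
    linarith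
end
end
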